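/- arXiv:2504.10687 — 9 statements merged into one kernel-verified Lean document; each statement's English description precedes it below -/
import Mathlib

section
/- If d is irrational with 0 < d < 1, then there exists a two-colouring of the circle of unit perimeter (i.e., of ℝ/ℤ) such that no two points of the same colour are at arc-distance exactly d. -/
/-!
Since `d` is irrational, `d` and `1` are linearly independent over `ℚ`, so some `ℚ`-linear
`φ : ℝ → ℚ` has `φ 1 = 0` and `φ d = 1`. Colour `x` by the parity of `⌊φ x⌋`: integer shifts
leave `φ` unchanged, while two points at arc-distance `d` differ by `±d` modulo `ℤ`, so their
values of `φ` differ by `±1` and the parities of the floors disagree.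
-/

theorem Module.exists_dual_apply_eq_one_of_notMem_span_singleton {K V : Type*} [Field K]
    [AddCommGroup V] [Module K V] {x y : V} (hx : x ∉ K ∙ y) :
    ∃ φ : Module.Dual K V, φ y = 0 ∧ φ x = 1 := by
  obtain ⟨f, hfx, hf⟩ := Submodule.exists_dual_map_eq_bot_of_notMem hx inferInstance
  have hfy : f y = 0 :=
    (Submodule.mem_bot K).1 (hf ▸ Submodule.mem_map_of_mem (Submodule.mem_span_singleton_self y))
  exact ⟨(f x)⁻¹ • f, by simp [hfy], inv_mul_cancel₀ hfx⟩

theorem Irrational.notMem_span_one {d : ℝ} (hd : Irrational d) : d ∉ ℚ ∙ (1 : ℝ) := by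
  rw [Submodule.mem_span_singleton]
  rintro ⟨q, rfl⟩
  exact hd ⟨q, by simp [Rat.smul_def]⟩

theorem Int.exists_eq_add_or_eq_sub_of_min_fract_eq {z d : ℝ}
    (h : min (Int.fract z) (1 - Int.fract z) = d) : ∃ m : ℤ, z = m + d ∨ z = m - d := by
  rcases min_choice (Int.fract z) (1 - Int.fract z) with hz | hz <;> rw [hz] at h
  · exact ⟨⌊z⌋, Or.inl (by rw [← h, Int.floor_add_fract])⟩
  · exact ⟨⌊z⌋ + 1, Or.inr (by rw [← h, Int.fract]; push_cast; ring)⟩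

theorem Module.Dual.apply_intCast_of_apply_one {φ : Module.Dual ℚ ℝ} (h : φ 1 = 0) (m : ℤ) :
    φ m = 0 := by
  rw [← zsmul_one, map_zsmul, h, smul_zero]

theorem stmt_0_general (d : ℝ) (hirr : Irrational d) :
    ∃ c : ℝ → Bool, (∀ x, c (x + 1) = c x) ∧
      ∀ x y : ℝ, min (Int.fract (x - y)) (1 - Int.fract (x - y)) = d → c x ≠ c y := by
  obtain ⟨φ, hφ1, hφd⟩ :=
    Module.exists_dual_apply_eq_one_of_notMem_span_singleton hirr.notMem_span_one
  refine ⟨fun x => decide (Even ⌊φ x⌋), fun x => by simp [hφ1], fun x y hxy => ?_⟩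
  have hφ : φ x = φ y + 1 ∨ φ x = φ y - 1 := by
    have hφm := Module.Dual.apply_intCast_of_apply_one hφ1
    obtain ⟨m, hm | hm⟩ := Int.exists_eq_add_or_eq_sub_of_min_fract_eq hxy
    · left; rw [← sub_add_cancel x y, hm, map_add, map_add, hφm, hφd, zero_add, add_comm]
    · right; rw [← sub_add_cancel x y, hm, map_add, map_sub, hφm, hφd]; ring
  rcases hφ with h | h <;>
    simp only [h, Int.floor_add_one, Int.floor_sub_one, Int.even_add_one, Int.even_sub_one,
      ne_eq, decide_eq_decide, not_iff_self, not_false_eq_true]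

/-- The circle of unit perimeter is modelled by ℝ with 1-periodic colourings;
the arc-distance between `x` and `y` is `min (Int.fract (x-y)) (1 - Int.fract (x-y))`. -/
theorem stmt_0 (d : ℝ) (hirr : Irrational d) (h0 : 0 < d) (h1 : d < 1) :
    ∃ c : ℝ → Bool, (∀ x, c (x + 1) = c x) ∧
      ∀ x y : ℝ, min (Int.fract (x - y)) (1 - Int.fract (x - y)) = d → c x ≠ c y :=
  stmt_0_general d hirr
end

section
/- If the Beatty sequences {⌊α_i n + β_i⌋}_{n=0}^∞ for i = 1,…,k (with all α_i > 1) partition ℕ, then the sequence S defined by s_m = i whenever m ∈ {⌊α_i n + β_i⌋}_{n=0}^∞ is a balanced sequence over {1,…,k}, and the density of the letter i in S equals 1/α_i. -/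
open Finset

namespace Stmt4

def pc (z : ℤ) : ℤ := max z 0

lemma pc_nonneg (z : ℤ) : 0 ≤ pc z := le_max_right _ _
lemma le_pc (z : ℤ) : z ≤ pc z := le_max_left _ _
lemma pc_mono {z w : ℤ} (h : z ≤ w) : pc z ≤ pc w := max_le_max h le_rfl
lemma pc_of_nonneg {z : ℤ} (h : 0 ≤ z) : pc z = z := max_eq_left h

variable {k : ℕ} (α β : Fin k → ℝ) (s : ℕ → Fin k)

noncomputable def XX (a : Fin k) (N : ℕ) : ℝ := ((N : ℝ) - β a) / α a

noncomputable def pcei (a : Fin k) (N : ℕ) : ℤ := pc ⌈XX α β a N⌉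

noncomputable def cnt (a : Fin k) (m L : ℕ) : ℕ :=
  ((Finset.range L).filter (fun t => s (m + t) = a)).card

variable {α β s}

lemma floor_nat_eq_iff {v : ℕ} {x : ℝ} :
    (v : ℤ) = ⌊x⌋ ↔ ((v : ℝ) ≤ x ∧ x < (v : ℝ) + 1) := by
  rw [eq_comm, Int.floor_eq_iff]
  push_cast
  tauto

lemma sChar
    (hpart : ∀ m : ℕ, ∃! p : Fin k × ℕ, (m : ℤ) = ⌊α p.1 * p.2 + β p.1⌋)
    (hs : ∀ m : ℕ, ∃ n : ℕ, (m : ℤ) = ⌊α (s m) * n + β (s m)⌋)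
    (a : Fin k) (m : ℕ) :
    s m = a ↔ ∃ n : ℕ, (m : ℤ) = ⌊α a * n + β a⌋ := by
  constructor
  · intro h
    obtain ⟨n, hn⟩ := hs m
    exact ⟨n, by rw [← h]; exact hn⟩
  · rintro ⟨n, hn⟩
    obtain ⟨p, hp, hu⟩ := hpart m
    have h1 : ((a, n) : Fin k × ℕ) = p := hu _ hn
    obtain ⟨n', hn'⟩ := hs m
    have h2 : ((s m, n') : Fin k × ℕ) = p := hu _ hn'
    have h3 : ((a, n) : Fin k × ℕ) = (s m, n') := h1.trans h2.symm
    exact (congrArg Prod.fst h3).symm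

lemma xx_mono (hα : ∀ i, 1 < α i) (a : Fin k) {N M : ℕ} (h : N ≤ M) :
    XX α β a N ≤ XX α β a M := by
  have hapos : (0:ℝ) < α a := lt_trans zero_lt_one (hα a)
  have h2 : ((N:ℝ) - β a) ≤ ((M:ℝ) - β a) := by
    have : (N:ℝ) ≤ M := by exact_mod_cast h
    linarith
  exact div_le_div_of_nonneg_right h2 hapos.le

lemma master
    (hα : ∀ i, 1 < α i)
    (hpart : ∀ m : ℕ, ∃! p : Fin k × ℕ, (m : ℤ) = ⌊α p.1 * p.2 + β p.1⌋)
    (hs : ∀ m : ℕ, ∃ n : ℕ, (m : ℤ) = ⌊α (s m) * n + β (s m)⌋)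
    (a : Fin k) (m L : ℕ) :
    (cnt s a m L : ℤ) = pcei α β a (m + L) - pcei α β a m := by
  classical
  have hapos : (0:ℝ) < α a := lt_trans zero_lt_one (hα a)
  have hmono : pcei α β a m ≤ pcei α β a (m + L) :=
    pc_mono (Int.ceil_mono (xx_mono hα a (Nat.le_add_right m L)))
  set A := (pcei α β a m).toNat with hA
  set B := (pcei α β a (m + L)).toNat with hB
  have hAcast : (A : ℤ) = pcei α β a m := Int.toNat_of_nonneg (pc_nonneg _)
  have hBcast : (B : ℤ) = pcei α β a (m + L) := Int.toNat_of_nonneg (pc_nonneg _)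
  have hAB : A ≤ B := Int.toNat_le_toNat hmono
  have hcard : ((Finset.range L).filter (fun t => s (m + t) = a)).card
      = (Finset.Ico A B).card := by
    apply Finset.card_bij' (i := fun t _ => (hs (m + t)).choose)
      (j := fun n _ => (⌊α a * n + β a⌋).toNat - m)
    · -- forward membership
      intro t ht
      have ht' := Finset.mem_filter.mp ht
      have htL : t < L := Finset.mem_range.mp ht'.1
      have hsa : s (m + t) = a := ht'.2
      set n := (hs (m + t)).choose with hn
      have hspec2 : ((m + t : ℕ) : ℤ) = ⌊α a * n + β a⌋ := by
        rw [← hsa]; exact (hs (m + t)).choose_spec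
      obtain ⟨hlow, hhigh⟩ := floor_nat_eq_iff.mp hspec2
      rw [Finset.mem_Ico]
      constructor
      · -- A ≤ n
        rw [hA, Int.toNat_le]
        apply max_le _ (Int.ofNat_nonneg n)
        rw [Int.ceil_le]
        show ((m:ℝ) - β a) / α a ≤ (n : ℝ)
        rw [div_le_iff₀ hapos]
        have : (m : ℝ) ≤ α a * n + β a := le_trans (by push_cast; linarith) hlow
        linarith [mul_comm (α a) (n:ℝ)]
      · -- n < B
        rw [hB, Int.lt_toNat]
        apply lt_max_of_lt_left
        rw [Int.lt_ceil]
        show ((n:ℤ):ℝ) < XX α β a (m + L)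
        rw [XX, lt_div_iff₀ hapos]
        have htL' : (t:ℝ) + 1 ≤ (L:ℝ) := by exact_mod_cast Nat.succ_le_of_lt htL
        push_cast
        push_cast at hhigh
        nlinarith [mul_comm (α a) (n:ℝ)]
    · -- backward membership
      intro n hn
      rw [Finset.mem_Ico] at hn
      obtain ⟨hnA, hnB⟩ := hn
      have hlow : (m:ℝ) ≤ α a * n + β a := by
        have h1 : (pcei α β a m : ℤ) ≤ (n:ℤ) := by rw [← hAcast]; exact_mod_cast hnA
        have h2 : ⌈XX α β a m⌉ ≤ (n:ℤ) := le_trans (le_pc _) h1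
        have h3 : XX α β a m ≤ ((n:ℤ):ℝ) := Int.ceil_le.mp h2
        rw [XX, div_le_iff₀ hapos] at h3
        push_cast at h3
        nlinarith [mul_comm (α a) (n:ℝ)]
      have hhigh : α a * n + β a < ((m:ℝ) + L) := by
        have h1 : (n:ℤ) < pcei α β a (m+L) := by rw [← hBcast]; exact_mod_cast hnB
        have h2 : (n:ℤ) < ⌈XX α β a (m+L)⌉ := by
          rcases lt_max_iff.mp h1 with h | h
          · exact h
          · exact absurd h (Int.ofNat_nonneg n).not_gt
        have h3 : ((n:ℤ):ℝ) < XX α β a (m+L) := Int.lt_ceil.mp h2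
        rw [XX, lt_div_iff₀ hapos] at h3
        push_cast at h3
        nlinarith [mul_comm (α a) (n:ℝ)]
      have hvm : (m:ℤ) ≤ ⌊α a * n + β a⌋ := Int.le_floor.mpr (by push_cast; linarith)
      have hvL : ⌊α a * n + β a⌋ < ((m:ℤ) + L) := Int.floor_lt.mpr (by push_cast; linarith)
      have hv0 : (0:ℤ) ≤ ⌊α a * n + β a⌋ := le_trans (Int.ofNat_nonneg m) hvm
      have hvN : ((⌊α a * n + β a⌋.toNat : ℤ)) = ⌊α a * n + β a⌋ := Int.toNat_of_nonneg hv0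
      rw [Finset.mem_filter, Finset.mem_range]
      have hmle : m ≤ ⌊α a * n + β a⌋.toNat := by omega
      constructor
      · omega
      · have haddt : m + (⌊α a * n + β a⌋.toNat - m) = ⌊α a * n + β a⌋.toNat := by omega
        rw [haddt]
        rw [sChar hpart hs]
        exact ⟨n, by rw [hvN]⟩
    · -- left inverse
      intro t ht
      have ht' := Finset.mem_filter.mp ht
      have hsa : s (m + t) = a := ht'.2
      have hspec2 : ((m + t : ℕ) : ℤ) = ⌊α a * ((hs (m + t)).choose : ℕ) + β a⌋ := by
        rw [← hsa]; exact (hs (m + t)).choose_spec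
      rw [← hspec2]
      omega
    · -- right inverse
      intro n hn
      rw [Finset.mem_Ico] at hn
      obtain ⟨hnA, hnB⟩ := hn
      -- same facts as backward membership
      have hlow : (m:ℝ) ≤ α a * n + β a := by
        have h1 : (pcei α β a m : ℤ) ≤ (n:ℤ) := by rw [← hAcast]; exact_mod_cast hnA
        have h2 : ⌈XX α β a m⌉ ≤ (n:ℤ) := le_trans (le_pc _) h1
        have h3 : XX α β a m ≤ ((n:ℤ):ℝ) := Int.ceil_le.mp h2
        rw [XX, div_le_iff₀ hapos] at h3
        push_cast at h3
        nlinarith [mul_comm (α a) (n:ℝ)]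
      have hvm : (m:ℤ) ≤ ⌊α a * n + β a⌋ := Int.le_floor.mpr (by push_cast; linarith)
      have hv0 : (0:ℤ) ≤ ⌊α a * n + β a⌋ := le_trans (Int.ofNat_nonneg m) hvm
      have hvN : ((⌊α a * n + β a⌋.toNat : ℤ)) = ⌊α a * n + β a⌋ := Int.toNat_of_nonneg hv0
      set v := ⌊α a * n + β a⌋.toNat with hvdef
      have haddt : m + (v - m) = v := by omega
      -- s v = a
      have hsv : s v = a := by
        rw [sChar hpart hs]
        exact ⟨n, by rw [hvN]⟩
      -- uniqueness of n
      have hspec : ((v : ℕ) : ℤ) = ⌊α a * ((hs v).choose : ℕ) + β a⌋ := by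
        rw [← hsv]; exact (hs v).choose_spec
      obtain ⟨p, hp, hu⟩ := hpart v
      have e1 : ((a, (hs v).choose) : Fin k × ℕ) = p := hu _ hspec
      have e2 : ((a, n) : Fin k × ℕ) = p := hu _ (by rw [hvN])
      have e3 : ((a, (hs v).choose) : Fin k × ℕ) = (a, n) := e1.trans e2.symm
      have e4 : (hs v).choose = n := congrArg Prod.snd e3
      show (hs (m + (v - m))).choose = n
      rw [haddt]
      exact e4
  rw [cnt, hcard, Nat.card_Ico]
  push_cast [Nat.cast_sub hAB]
  rw [hAcast, hBcast]


lemma cnt_sum {m L : ℕ} : ∑ a : Fin k, cnt s a m L = L := by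
  classical
  have h := Finset.card_eq_sum_card_fiberwise
    (f := fun t => s (m + t)) (s := Finset.range L) (t := Finset.univ)
    (fun x _ => Finset.mem_univ _)
  rw [Finset.card_range] at h
  simpa [cnt] using h.symm

lemma pcei_sum
    (hα : ∀ i, 1 < α i)
    (hpart : ∀ m : ℕ, ∃! p : Fin k × ℕ, (m : ℤ) = ⌊α p.1 * p.2 + β p.1⌋)
    (hs : ∀ m : ℕ, ∃ n : ℕ, (m : ℤ) = ⌊α (s m) * n + β (s m)⌋)
    (N : ℕ) :
    ∑ a : Fin k, pcei α β a N = (N : ℤ) + ∑ a : Fin k, pcei α β a 0 := by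
  have h0 : ∑ a : Fin k, cnt s a 0 N = N := cnt_sum (s := s) (m := 0) (L := N)
  have h1 : ∑ a : Fin k, (cnt s a 0 N : ℤ) = (N : ℤ) := by exact_mod_cast h0
  have h2 : ∀ a : Fin k, (cnt s a 0 N : ℤ) = pcei α β a N - pcei α β a 0 := by
    intro a
    have := master hα hpart hs a 0 N
    rwa [Nat.zero_add] at this
  rw [Finset.sum_congr rfl (fun a _ => h2 a)] at h1
  rw [Finset.sum_sub_distrib] at h1
  linarith

/-- ceiling of a small shift -/
lemma ceil_shift {c δ : ℝ} (hlow : -(1 - ((⌈c⌉:ℝ) - c)) < δ) (hhigh : δ < 1) :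
    ⌈c + δ⌉ = ⌈c⌉ + (if ((⌈c⌉:ℝ) - c) < δ then 1 else 0) := by
  have hcf0 : (0:ℝ) ≤ (⌈c⌉:ℝ) - c := by linarith [Int.le_ceil c]
  by_cases h : ((⌈c⌉:ℝ) - c) < δ
  · rw [if_pos h]
    rw [Int.ceil_eq_iff]
    constructor
    · push_cast
      linarith
    · push_cast
      linarith
  · rw [if_neg h]
    push_neg at h
    rw [add_zero, Int.ceil_eq_iff]
    constructor
    · push_cast
      linarith
    · linarith

/-- simultaneous Dirichlet approximation, with arbitrarily large modulus -/
lemma dirichlet {k : ℕ} (r : Fin k → ℝ) {ε : ℝ} (hε : 0 < ε) (M : ℕ) :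
    ∃ L : ℕ, M + 1 ≤ L ∧ ∃ K : Fin k → ℤ, ∀ a, |(L:ℝ) * r a - K a| < ε := by
  classical
  obtain ⟨Q, hQ⟩ := exists_nat_one_div_lt hε
  set QQ : ℕ := Q + 1 with hQQ
  have hQQpos : (0:ℝ) < (QQ:ℝ) := by positivity
  have hQQcast : (QQ:ℝ) = (Q:ℝ) + 1 := by rw [hQQ]; push_cast; ring
  have hfr0 : ∀ x : ℝ, (0:ℝ) ≤ x - ⌊x⌋ := fun x => by linarith [Int.floor_le x]
  have hfr1 : ∀ x : ℝ, x - ⌊x⌋ < 1 := fun x => by linarith [Int.lt_floor_add_one x]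
  have hbox : ∀ y : ℝ, (⌊(y - ⌊y⌋) * QQ⌋).toNat < QQ := by
    intro y
    have h2 : ⌊(y - ⌊y⌋) * QQ⌋ < (QQ:ℤ) := by
      apply Int.floor_lt.mpr
      have h3 : ((QQ:ℤ):ℝ) = (QQ:ℝ) := by push_cast; ring
      rw [h3]
      nlinarith [hfr0 y, hfr1 y]
    omega
  have extract : ∀ y z : ℝ, (⌊(y - ⌊y⌋) * QQ⌋).toNat = (⌊(z - ⌊z⌋) * QQ⌋).toNat →
      ⌊(y - ⌊y⌋) * QQ⌋ = ⌊(z - ⌊z⌋) * QQ⌋ := by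
    intro y z h
    have hn1 : (0:ℤ) ≤ ⌊(y - ⌊y⌋) * QQ⌋ := Int.floor_nonneg.mpr (mul_nonneg (hfr0 y) hQQpos.le)
    have hn2 : (0:ℤ) ≤ ⌊(z - ⌊z⌋) * QQ⌋ := Int.floor_nonneg.mpr (mul_nonneg (hfr0 z) hQQpos.le)
    omega
  have key : ∀ t1 t2 : ℕ, t1 + (M + 1) ≤ t2 →
      (∀ a, ⌊((t1:ℝ) * r a - ⌊(t1:ℝ) * r a⌋) * QQ⌋ = ⌊((t2:ℝ) * r a - ⌊(t2:ℝ) * r a⌋) * QQ⌋) →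
      ∃ L : ℕ, M + 1 ≤ L ∧ ∃ K : Fin k → ℤ, ∀ a, |(L:ℝ) * r a - K a| < ε := by
    intro t1 t2 ht12 hfe
    refine ⟨t2 - t1, by omega, fun a => ⌊(t2:ℝ) * r a⌋ - ⌊(t1:ℝ) * r a⌋, ?_⟩
    intro a
    set x1 : ℝ := (t1:ℝ) * r a - ⌊(t1:ℝ) * r a⌋ with hx1
    set x2 : ℝ := (t2:ℝ) * r a - ⌊(t2:ℝ) * r a⌋ with hx2
    have habs : |x2 - x1| < 1 / QQ := by
      rw [abs_sub_lt_iff]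
      have e1 := Int.floor_le (x1 * QQ)
      have e2 := Int.lt_floor_add_one (x1 * QQ)
      have e3 := Int.floor_le (x2 * QQ)
      have e4 := Int.lt_floor_add_one (x2 * QQ)
      rw [hfe a] at e1 e2
      constructor
      · rw [lt_div_iff₀ hQQpos]; nlinarith
      · rw [lt_div_iff₀ hQQpos]; nlinarith
    have hcast : ((t2 - t1 : ℕ) : ℝ) = (t2:ℝ) - (t1:ℝ) := by
      have : t1 ≤ t2 := by omega
      push_cast [Nat.cast_sub this]
      ring
    have heq2 : ((t2 - t1 : ℕ) : ℝ) * r a - ((⌊(t2:ℝ) * r a⌋ - ⌊(t1:ℝ) * r a⌋ : ℤ) : ℝ) = x2 - x1 := by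
      rw [hcast, hx1, hx2]
      push_cast
      ring
    rw [heq2]
    calc |x2 - x1| < 1 / QQ := habs
    _ = 1 / ((Q:ℝ) + 1) := by rw [hQQcast]
    _ < ε := hQ
  set g : Fin (QQ ^ k + 1) → (Fin k → Fin QQ) := fun j a =>
    ⟨(⌊(((((j : ℕ) * (M + 1) : ℕ)):ℝ) * r a - ⌊((((j : ℕ) * (M + 1) : ℕ)):ℝ) * r a⌋) * QQ⌋).toNat,
      hbox _⟩ with hg
  have hcard : Fintype.card (Fin k → Fin QQ) < Fintype.card (Fin (QQ ^ k + 1)) := by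
    simp [Fintype.card_fun]
  obtain ⟨j1, j2, hne, heq⟩ := Fintype.exists_ne_map_eq_of_card_lt g hcard
  have hmul : ∀ u v : Fin (QQ ^ k + 1), u < v → (u:ℕ) * (M+1) + (M+1) ≤ (v:ℕ) * (M+1) := by
    intro u v huv
    have h1 : (u:ℕ) + 1 ≤ (v:ℕ) := huv
    calc (u:ℕ) * (M+1) + (M+1) = ((u:ℕ) + 1) * (M+1) := by ring
    _ ≤ (v:ℕ) * (M+1) := Nat.mul_le_mul_right _ h1
  have hfeq : ∀ u v : Fin (QQ ^ k + 1), g u = g v → ∀ a,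
      ⌊((((u:ℕ) * (M+1) : ℕ):ℝ) * r a - ⌊(((u:ℕ) * (M+1) : ℕ):ℝ) * r a⌋) * QQ⌋
      = ⌊((((v:ℕ) * (M+1) : ℕ):ℝ) * r a - ⌊(((v:ℕ) * (M+1) : ℕ):ℝ) * r a⌋) * QQ⌋ := by
    intro u v hguv a
    apply extract
    have hc := congrFun hguv a
    have hc2 := congrArg Fin.val hc
    simpa [hg] using hc2
  rcases lt_or_gt_of_ne hne with hlt | hlt
  · exact key _ _ (hmul _ _ hlt) (hfeq _ _ heq)
  · exact key _ _ (hmul _ _ hlt) (hfeq _ _ heq.symm)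

variable (α β)

noncomputable def rr (a : Fin k) : ℝ := (α a)⁻¹
noncomputable def ca (a : Fin k) : ℝ := XX α β a 0
noncomputable def ee (a : Fin k) : ℤ := ⌈ca α β a⌉
noncomputable def cf0 (a : Fin k) : ℝ := ((ee α β a : ℤ) : ℝ) - ca α β a
noncomputable def Pt (a : Fin k) : ℤ := pc (ee α β a) - ee α β a

variable {α β}

lemma cf0_nonneg (a : Fin k) : 0 ≤ cf0 α β a := by
  have := Int.le_ceil (ca α β a)
  rw [cf0, ee]
  linarith

lemma cf0_lt_one (a : Fin k) : cf0 α β a < 1 := by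
  have := Int.ceil_lt_add_one (ca α β a)
  rw [cf0, ee]
  linarith

lemma Pt_nonneg (a : Fin k) : 0 ≤ Pt α β a := by
  rw [Pt]
  have := le_pc (ee α β a)
  omega

lemma XX_eq (hα : ∀ i, 1 < α i) (a : Fin k) (N : ℕ) :
    XX α β a N = (N : ℝ) * rr α a + ca α β a := by
  have hapos : (0:ℝ) < α a := lt_trans zero_lt_one (hα a)
  rw [XX, ca, XX, rr]
  field_simp
  ring

lemma prelim
    (hα : ∀ i, 1 < α i)
    (hpart : ∀ m : ℕ, ∃! p : Fin k × ℕ, (m : ℤ) = ⌊α p.1 * p.2 + β p.1⌋)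
    (hs : ∀ m : ℕ, ∃ n : ℕ, (m : ℤ) = ⌊α (s m) * n + β (s m)⌋) :
    (∑ a, rr α a = 1) ∧ ∃ N1 : ℕ, ∀ N, N1 ≤ N → ∀ a, pcei α β a N = ⌈XX α β a N⌉ := by
  classical
  set Cb : ℝ := ∑ b, |β b| with hCbdef
  have hCb : ∀ a, β a ≤ Cb := by
    intro a
    refine le_trans (le_abs_self _) ?_
    exact Finset.single_le_sum (f := fun b => |β b|) (fun b _ => abs_nonneg _) (Finset.mem_univ a)
  obtain ⟨N1, hN1⟩ := exists_nat_ge Cb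
  have hceil : ∀ N : ℕ, N1 ≤ N → ∀ a, pcei α β a N = ⌈XX α β a N⌉ := by
    intro N hN a
    rw [pcei]
    apply pc_of_nonneg
    apply Int.ceil_nonneg
    have hapos : (0:ℝ) < α a := lt_trans zero_lt_one (hα a)
    apply div_nonneg _ hapos.le
    have h1 : (N1:ℝ) ≤ (N:ℝ) := by exact_mod_cast hN
    have := hCb a
    linarith
  refine ⟨?_, N1, hceil⟩
  by_contra hne
  set σ : ℝ := ∑ a, rr α a with hσdef
  set Sca : ℝ := ∑ a, ca α β a with hScadef
  set CsR : ℝ := ((∑ a, pcei α β a 0 : ℤ) : ℝ) with hCsRdef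
  have hXsum : ∀ N : ℕ, (∑ a, XX α β a N) = N * σ + Sca := by
    intro N
    rw [Finset.sum_congr rfl (fun a _ => XX_eq hα a N), Finset.sum_add_distrib, ← Finset.mul_sum]
  have hbounds : ∀ N : ℕ, N1 ≤ N → |(N:ℝ) * σ + Sca - ((N:ℝ) + CsR)| ≤ k := by
    intro N hN
    have hlin := pcei_sum hα hpart hs N
    have hlin2 : (∑ a, (⌈XX α β a N⌉:ℤ)) = (N:ℤ) + ∑ a, pcei α β a 0 := by
      rw [← hlin]
      exact (Finset.sum_congr rfl (fun a _ => (hceil N hN a).symm))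
    have hlinR : (∑ a, ((⌈XX α β a N⌉:ℤ):ℝ)) = (N:ℝ) + CsR := by
      rw [hCsRdef]
      exact_mod_cast congrArg (fun z : ℤ => (z:ℝ)) hlin2
    have hup : (∑ a, XX α β a N) ≤ (N:ℝ) + CsR := by
      rw [← hlinR]
      apply Finset.sum_le_sum
      intro a _
      exact Int.le_ceil _
    have hdown : (N:ℝ) + CsR ≤ (∑ a, XX α β a N) + k := by
      rw [← hlinR]
      have h1 : (∑ a, ((⌈XX α β a N⌉:ℤ):ℝ)) ≤ ∑ a, (XX α β a N + 1) := by
        apply Finset.sum_le_sum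
        intro a _
        have := Int.ceil_lt_add_one (XX α β a N)
        linarith
      rw [Finset.sum_add_distrib] at h1
      simpa using h1
    rw [← hXsum N]
    rw [abs_le]
    constructor <;> linarith
  have habs : (0:ℝ) < |σ - 1| := abs_pos.mpr (sub_ne_zero.mpr hne)
  obtain ⟨N, hNbig⟩ := exists_nat_gt (((k:ℝ) + |Sca - CsR|)/|σ - 1| + N1)
  have hNge : N1 ≤ N := by
    have h1 : (0:ℝ) ≤ ((k:ℝ) + |Sca - CsR|)/|σ - 1| := by positivity
    have h2 : (N1:ℝ) ≤ (N:ℝ) := by linarith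
    exact_mod_cast h2
  have h3 := hbounds N hNge
  have h4 : |(N:ℝ) * (σ - 1)| ≤ (k:ℝ) + |Sca - CsR| := by
    have h5 : (N:ℝ) * (σ - 1) = ((N:ℝ) * σ + Sca - ((N:ℝ) + CsR)) - (Sca - CsR) := by ring
    rw [h5]
    calc |((N:ℝ) * σ + Sca - ((N:ℝ) + CsR)) - (Sca - CsR)|
        ≤ |(N:ℝ) * σ + Sca - ((N:ℝ) + CsR)| + |Sca - CsR| := abs_sub _ _
    _ ≤ (k:ℝ) + |Sca - CsR| := by linarith
  rw [abs_mul, abs_of_nonneg (Nat.cast_nonneg N)] at h4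
  have h6 : (N:ℝ) ≤ ((k:ℝ) + |Sca - CsR|)/|σ - 1| := by
    rw [le_div_iff₀ habs]
    exact h4
  linarith

lemma key
    (hα : ∀ i, 1 < α i)
    (hpart : ∀ m : ℕ, ∃! p : Fin k × ℕ, (m : ℤ) = ⌊α p.1 * p.2 + β p.1⌋)
    (hs : ∀ m : ℕ, ∃ n : ℕ, (m : ℤ) = ⌊α (s m) * n + β (s m)⌋) :
    ∀ a : Fin k, (-1:ℝ) ≤ ca α β a := by
  classical
  by_contra hbad
  push_neg at hbad
  obtain ⟨abad, habad⟩ := hbad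
  have hk : Nonempty (Fin k) := ⟨abad⟩
  have huniv : (Finset.univ : Finset (Fin k)).Nonempty := Finset.univ_nonempty
  obtain ⟨hσ, N1, hceil⟩ := prelim (s := s) hα hpart hs
  -- T-constancy
  have hT : ∀ N : ℕ, N1 ≤ N → ∑ a, (((⌈XX α β a N⌉:ℤ):ℝ) - XX α β a N)
      = ((∑ a, pcei α β a 0 : ℤ):ℝ) - ∑ a, ca α β a := by
    intro N hN
    have hlin := pcei_sum (s := s) hα hpart hs N
    have hlin2 : (∑ a, (⌈XX α β a N⌉:ℤ)) = (N:ℤ) + ∑ a, pcei α β a 0 := by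
      rw [← hlin]
      exact (Finset.sum_congr rfl (fun a _ => (hceil N hN a).symm))
    have hlinR : (∑ a, ((⌈XX α β a N⌉:ℤ):ℝ)) = (N:ℝ) + ((∑ a, pcei α β a 0 : ℤ):ℝ) := by
      exact_mod_cast congrArg (fun z : ℤ => (z:ℝ)) hlin2
    have hXsum : (∑ a, XX α β a N) = (N:ℝ) * 1 + ∑ a, ca α β a := by
      rw [← hσ]
      rw [Finset.sum_congr rfl (fun a _ => XX_eq hα a N), Finset.sum_add_distrib, ← Finset.mul_sum]
    rw [Finset.sum_sub_distrib, hlinR, hXsum]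
    ring
  -- Ptot
  set PtotZ : ℤ := ∑ a, Pt α β a with hPtotZ
  have hPtot_nonneg : 0 ≤ PtotZ := Finset.sum_nonneg (fun a _ => Pt_nonneg a)
  have hPtot_real : ((PtotZ:ℤ):ℝ)
      = ((∑ a, pcei α β a 0 : ℤ):ℝ) - ∑ a, ca α β a - ∑ a, cf0 α β a := by
    have h1 : ∑ a, cf0 α β a = (((∑ a, ee α β a : ℤ)):ℝ) - ∑ a, ca α β a := by
      simp only [cf0]
      rw [Finset.sum_sub_distrib]
      push_cast
      ring
    have h2 : ∀ a : Fin k, pcei α β a 0 = pc (ee α β a) := fun a => rfl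
    have h3 : (∑ a, pcei α β a 0 : ℤ) = ∑ a, pc (ee α β a) :=
      Finset.sum_congr rfl (fun a _ => h2 a)
    rw [h1, h3, hPtotZ]
    simp only [Pt]
    push_cast
    rw [Finset.sum_sub_distrib]
    ring
  -- rational witnesses
  have hQchoice : ∀ a : Fin k, ¬ Irrational (rr α a) → ∃ q : ℚ, (q:ℝ) = rr α a := by
    intro a h
    rw [Irrational] at h
    push_neg at h
    obtain ⟨q, hq⟩ := h
    exact ⟨q, hq⟩
  set φ3 : Fin k → ℝ := fun a =>
    if h : Irrational (rr α a) then 1 else 1/((Classical.choose (hQchoice a h)).den) with hφ3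
  have hφ3pos : ∀ a, 0 < φ3 a := by
    intro a
    simp only [hφ3]
    by_cases h : Irrational (rr α a)
    · rw [dif_pos h]; norm_num
    · rw [dif_neg h]
      have hd : 0 < ((Classical.choose (hQchoice a h)).den : ℝ) := by
        exact_mod_cast Rat.den_pos _
      positivity
  have ratkill : ∀ a : Fin k, ∀ (h : ¬ Irrational (rr α a)), ∀ (LL : ℕ) (K : ℤ),
      |(LL:ℝ) * rr α a - K| < φ3 a → (LL:ℝ) * rr α a = K := by
    intro a h LL K habs
    set q : ℚ := Classical.choose (hQchoice a h) with hqdef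
    have hq : (q:ℝ) = rr α a := Classical.choose_spec (hQchoice a h)
    have hφ3a : φ3 a = 1/(q.den:ℝ) := by simp only [hφ3]; rw [dif_neg h]
    have hdpos : (0:ℝ) < (q.den:ℝ) := by exact_mod_cast Rat.den_pos _
    have hint : (((LL:ℤ) * q.num - K * (q.den:ℤ) : ℤ):ℝ) = ((LL:ℝ) * rr α a - K) * (q.den:ℝ) := by
      have hdne : ((q.den:ℝ)) ≠ 0 := ne_of_gt hdpos
      rw [← hq]
      rw [Rat.cast_def]
      push_cast
      field_simp
    have habs2 : |(((LL:ℤ) * q.num - K * (q.den:ℤ) : ℤ):ℝ)| < 1 := by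
      rw [hint, abs_mul, abs_of_pos hdpos]
      rw [hφ3a] at habs
      calc |(LL:ℝ) * rr α a - K| * (q.den:ℝ) < (1/(q.den:ℝ)) * (q.den:ℝ) := by
            apply mul_lt_mul_of_pos_right habs hdpos
      _ = 1 := by field_simp
    have habs3 : |((LL:ℤ) * q.num - K * (q.den:ℤ) : ℤ)| < 1 := by exact_mod_cast habs2
    have hz : ((LL:ℤ) * q.num - K * (q.den:ℤ) : ℤ) = 0 := Int.abs_lt_one_iff.mp habs3
    have hz2 : (((LL:ℤ) * q.num - K * (q.den:ℤ) : ℤ):ℝ) = 0 := by exact_mod_cast hz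
    rw [hint] at hz2
    rcases mul_eq_zero.mp hz2 with h1 | h1
    · linarith [abs_nonneg ((LL:ℝ) * rr α a - K)]
    · linarith
  -- epsilon
  set φ2 : Fin k → ℝ := fun a => if 0 < cf0 α β a then cf0 α β a else 1 with hφ2
  have hφ2pos : ∀ a, 0 < φ2 a := by
    intro a
    simp only [hφ2]
    by_cases h : 0 < cf0 α β a
    · rwa [if_pos h]
    · rw [if_neg h]; norm_num
  set ψ : Fin k → ℝ := fun a => min (1 - cf0 α β a) (min (φ2 a) (φ3 a)) with hψ
  have hψpos : ∀ a, 0 < ψ a := by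
    intro a
    simp only [hψ]
    have h1 : 0 < 1 - cf0 α β a := by linarith [cf0_lt_one (α := α) (β := β) a]
    exact lt_min h1 (lt_min (hφ2pos a) (hφ3pos a))
  set ε : ℝ := min (1/((k:ℝ)+1)) (Finset.univ.inf' huniv ψ) with hε
  have hεpos : 0 < ε := by
    rw [hε]
    apply lt_min
    · positivity
    · exact (Finset.lt_inf'_iff huniv).mpr (fun a _ => hψpos a)
  have hεψ : ∀ a, ε ≤ ψ a := by
    intro a
    rw [hε]
    exact le_trans (min_le_right _ _) (Finset.inf'_le _ (Finset.mem_univ a))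
  have hε1 : ∀ a, ε ≤ 1 - cf0 α β a := fun a => le_trans (hεψ a) (by simp only [hψ]; exact min_le_left _ _)
  have hε2 : ∀ a, 0 < cf0 α β a → ε ≤ cf0 α β a := by
    intro a h
    refine le_trans (hεψ a) ?_
    simp only [hψ]
    refine le_trans (min_le_right _ _) (le_trans (min_le_left _ _) ?_)
    simp only [hφ2]
    rw [if_pos h]
  have hε3 : ∀ a, ε ≤ φ3 a := by
    intro a
    refine le_trans (hεψ a) ?_
    simp only [hψ]
    exact le_trans (min_le_right _ _) (min_le_right _ _)
  have hεk : (k:ℝ) * ε < 1 := by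
    have h1 : ε ≤ 1/((k:ℝ)+1) := by rw [hε]; exact min_le_left _ _
    have h2 : (0:ℝ) < (k:ℝ) + 1 := by positivity
    calc (k:ℝ) * ε ≤ (k:ℝ) * (1/((k:ℝ)+1)) := by
          apply mul_le_mul_of_nonneg_left h1 (Nat.cast_nonneg k)
    _ < 1 := by rw [mul_one_div, div_lt_one h2]; linarith
  have hkpos : 0 < k := abad.pos
  have hεlt1 : ε < 1 := by
    have h1 : ε ≤ 1/((k:ℝ)+1) := by rw [hε]; exact min_le_left _ _
    have h2 : (1:ℝ) ≤ (k:ℝ) := by exact_mod_cast hkpos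
    have h3 : (1:ℝ)/((k:ℝ)+1) < 1 := by
      rw [div_lt_one (by linarith)]
      linarith
    linarith
  -- accounting at a Dirichlet modulus
  have acct : ∀ (L : ℕ), N1 ≤ L → ∀ K : Fin k → ℤ, (∀ a, |(L:ℝ) * rr α a - K a| < ε) →
      (PtotZ:ℝ) = ∑ a, (if (cf0 α β a = 0 ∧ Irrational (rr α a)) ∧ 0 < (L:ℝ) * rr α a - K a
        then (1:ℝ) else 0) := by
    intro L hL K hK
    set δ : Fin k → ℝ := fun a => (L:ℝ) * rr α a - K a with hδ
    have hδbound : ∀ a, |δ a| < ε := by intro a; simp only [hδ]; exact hK a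
    have hsumδ : ∑ a, δ a = 0 := by
      have h1 : ∑ a, δ a = (L:ℝ) - ((∑ a, K a : ℤ):ℝ) := by
        simp only [hδ]
        rw [Finset.sum_sub_distrib, ← Finset.mul_sum, hσ]
        push_cast
        ring
      have h2 : |∑ a, δ a| ≤ ∑ a, |δ a| := Finset.abs_sum_le_sum_abs _ _
      have h3 : ∑ a, |δ a| < ∑ _a : Fin k, ε :=
        Finset.sum_lt_sum_of_nonempty huniv (fun a _ => hδbound a)
      have h4 : ∑ _a : Fin k, ε = (k:ℝ) * ε := by
        rw [Finset.sum_const, Finset.card_univ, Fintype.card_fin, nsmul_eq_mul]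
      have h5 : |∑ a, δ a| < 1 := by
        rw [h4] at h3
        linarith
      have h6 : |((L:ℤ) - ∑ a, K a : ℤ)| < 1 := by
        have hcast : (((L:ℤ) - ∑ a, K a : ℤ):ℝ) = ∑ a, δ a := by rw [h1]; push_cast; ring
        have h5' : |(((L:ℤ) - ∑ a, K a : ℤ):ℝ)| < 1 := by rw [hcast]; exact h5
        exact_mod_cast h5'
      have h7 : ((L:ℤ) - ∑ a, K a : ℤ) = 0 := Int.abs_lt_one_iff.mp h6
      rw [h1]
      have : ((∑ a, K a : ℤ):ℝ) = (L:ℝ) := by exact_mod_cast congrArg (fun z : ℤ => (z:ℝ)) (by omega : (∑ a, K a : ℤ) = (L:ℤ))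
      rw [this]
      ring
    have hpoint : ∀ a, ((⌈XX α β a L⌉:ℤ):ℝ) - XX α β a L
        = cf0 α β a - δ a + (if cf0 α β a < δ a then (1:ℝ) else 0) := by
      intro a
      have hXL : XX α β a L = (ca α β a + δ a) + ((K a : ℤ):ℝ) := by
        rw [XX_eq hα]
        simp only [hδ]
        push_cast
        ring
      have hc : ⌈XX α β a L⌉ = ⌈ca α β a + δ a⌉ + K a := by
        rw [hXL, Int.ceil_add_intCast]
      have hlow : -(1 - ((⌈ca α β a⌉:ℝ) - ca α β a)) < δ a := by
        have h1 := hδbound a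
        have h2 := hε1 a
        have h3 : cf0 α β a = (⌈ca α β a⌉:ℝ) - ca α β a := by rw [cf0, ee]
        rw [abs_lt] at h1
        rw [← h3]
        linarith
      have hhigh : δ a < 1 := by
        have h1 := hδbound a
        rw [abs_lt] at h1
        linarith
      have hshift := ceil_shift hlow hhigh
      rw [hc, hshift, hXL]
      have h3 : cf0 α β a = (⌈ca α β a⌉:ℝ) - ca α β a := by rw [cf0, ee]
      rw [← h3]
      by_cases h : cf0 α β a < δ a
      · rw [if_pos h, if_pos (by rw [h3] at h; exact h)]
        push_cast
        rw [h3]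
        ring
      · rw [if_neg h, if_neg (by rw [h3] at h; exact h)]
        push_cast
        rw [h3]
        ring
    have hsum := hT L hL
    rw [Finset.sum_congr rfl (fun a _ => hpoint a)] at hsum
    rw [Finset.sum_add_distrib, Finset.sum_sub_distrib, hsumδ] at hsum
    have hw : ∑ a, (if cf0 α β a < δ a then (1:ℝ) else 0) = (PtotZ:ℝ) := by
      rw [hPtot_real]
      linarith
    have hindeq : ∀ a, (if cf0 α β a < δ a then (1:ℝ) else 0)
        = (if (cf0 α β a = 0 ∧ Irrational (rr α a)) ∧ 0 < δ a then (1:ℝ) else 0) := by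
      intro a
      by_cases h : cf0 α β a < δ a
      · rw [if_pos h]
        have hδpos : 0 < δ a := lt_of_le_of_lt (cf0_nonneg a) h
        have hz : cf0 α β a = 0 := by
          by_contra hz
          have h0 : 0 < cf0 α β a := lt_of_le_of_ne (cf0_nonneg a) (Ne.symm hz)
          have ha1 := hε2 a h0
          have ha2 := hδbound a
          rw [abs_lt] at ha2
          linarith
        have hirr : Irrational (rr α a) := by
          by_contra hirr
          have h8 := ratkill a hirr L (K a) (lt_of_lt_of_le (hδbound a) (hε3 a))
          have h9 : δ a = 0 := by simp only [hδ]; rw [sub_eq_zero]; exact h8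
          rw [h9] at hδpos
          exact absurd hδpos (lt_irrefl 0)
        rw [if_pos ⟨⟨hz, hirr⟩, hδpos⟩]
      · rw [if_neg h, if_neg]
        rintro ⟨⟨hz, _⟩, hδpos⟩
        apply h
        rw [hz]
        exact hδpos
    rw [Finset.sum_congr rfl (fun a _ => hindeq a)] at hw
    exact hw.symm
  -- abad has a positive phantom count
  have hebad : ee α β abad ≤ -1 := by
    rw [ee]
    have : ca α β abad ≤ ((-1 : ℤ):ℝ) := by push_cast; linarith
    exact Int.ceil_le.mpr this
  have hPtbad : 1 ≤ Pt α β abad := by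
    rw [Pt, pc, max_eq_right (by omega : ee α β abad ≤ 0)]
    omega
  have hPtot1 : 1 ≤ PtotZ := by
    rw [hPtotZ]
    calc (1:ℤ) ≤ Pt α β abad := hPtbad
    _ ≤ ∑ a, Pt α β a := Finset.single_le_sum (fun a _ => Pt_nonneg a) (Finset.mem_univ abad)
  -- predicate
  set Zp : Fin k → Prop := fun a => cf0 α β a = 0 ∧ Irrational (rr α a) with hZp
  set Zf : Finset (Fin k) := Finset.univ.filter Zp with hZf
  -- first Dirichlet modulus
  obtain ⟨L0, hL0ge, K0, hK0⟩ := dirichlet (rr α) (by positivity : (0:ℝ) < ε/2) N1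
  have hL0N1 : N1 ≤ L0 := by omega
  set δ0 : Fin k → ℝ := fun a => (L0:ℝ) * rr α a - K0 a with hδ0
  have hacct0 := acct L0 hL0N1 K0 (fun a => lt_of_lt_of_le (hK0 a) (by linarith))
  have hcard0 : PtotZ = ((Finset.univ.filter (fun a => Zp a ∧ 0 < δ0 a)).card : ℤ) := by
    have := hacct0
    rw [Finset.sum_boole] at this
    exact_mod_cast this
  -- the support is inside Zf and nonempty
  have hF0sub : (Finset.univ.filter (fun a => Zp a ∧ 0 < δ0 a)) ⊆ Zf := by
    intro a ha
    rw [Finset.mem_filter] at ha ⊢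
    exact ⟨ha.1, ha.2.1⟩
  have hZfne : Zf.Nonempty := by
    have h1 : 0 < (Finset.univ.filter (fun a => Zp a ∧ 0 < δ0 a)).card := by
      have := hcard0
      omega
    obtain ⟨a, ha⟩ := Finset.card_pos.mp h1
    exact ⟨a, hF0sub ha⟩
  -- delta0 does not vanish on Zf
  have hδ0ne : ∀ a ∈ Zf, δ0 a ≠ 0 := by
    intro a ha h0
    rw [hZf, Finset.mem_filter] at ha
    have hirr : Irrational (rr α a) := ha.2.2
    have hL0pos : 0 < L0 := by omega
    have hrra : rr α a = ((K0 a : ℝ))/((L0:ℝ)) := by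
      have hL0ne : ((L0:ℕ):ℝ) ≠ 0 := by positivity
      have h1 : (L0:ℝ) * rr α a = K0 a := by
        simp only [hδ0] at h0
        linarith
      field_simp
      linarith [h1]
    apply hirr
    refine ⟨(K0 a : ℚ)/((L0:ℕ):ℚ), ?_⟩
    rw [hrra]
    push_cast
    ring
  -- minimal deviation on Zf
  set η : ℝ := Zf.inf' hZfne (fun a => |δ0 a|) with hη
  have hηpos : 0 < η := by
    rw [hη]
    rw [Finset.lt_inf'_iff]
    intro a ha
    exact abs_pos.mpr (hδ0ne a ha)
  have hηle : ∀ a ∈ Zf, η ≤ |δ0 a| := by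
    intro a ha
    rw [hη]
    exact Finset.inf'_le _ ha
  -- second Dirichlet modulus
  have hminpos : (0:ℝ) < min (ε/2) (η/2) := lt_min (by positivity) (by positivity)
  obtain ⟨t, htge, Kt, hKt⟩ := dirichlet (rr α) hminpos (L0 + N1)
  set L1 : ℕ := t - L0 with hL1def
  have hL1N1 : N1 ≤ L1 := by omega
  have hcastL1 : ((L1:ℕ):ℝ) = (t:ℝ) - (L0:ℝ) := by
    rw [hL1def]
    push_cast [Nat.cast_sub (by omega : L0 ≤ t)]
    ring
  set K1 : Fin k → ℤ := fun a => Kt a - K0 a with hK1def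
  set δ1 : Fin k → ℝ := fun a => (L1:ℝ) * rr α a - K1 a with hδ1
  have hδ1eq : ∀ a, δ1 a = ((t:ℝ) * rr α a - Kt a) - δ0 a := by
    intro a
    simp only [hδ1, hδ0, hK1def]
    rw [hcastL1]
    push_cast
    ring
  have hK1q : ∀ a, |(L1:ℝ) * rr α a - K1 a| < ε := by
    intro a
    have h1 : |δ1 a| < ε := by
      rw [hδ1eq a]
      have h2 := hKt a
      have h3 := hK0 a
      have h4 : |((t:ℝ) * rr α a - Kt a) - δ0 a| ≤ |(t:ℝ) * rr α a - Kt a| + |δ0 a| :=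
        abs_sub _ _
      have h5 : min (ε/2) (η/2) ≤ ε/2 := min_le_left _ _
      simp only [hδ0] at *
      linarith
    simpa only [hδ1] using h1
  have hacct1 := acct L1 hL1N1 K1 hK1q
  have hcard1 : PtotZ = ((Finset.univ.filter (fun a => Zp a ∧ 0 < δ1 a)).card : ℤ) := by
    have := hacct1
    rw [Finset.sum_boole] at this
    have h2 : ∀ a, ((Zp a) ∧ 0 < (L1:ℝ) * rr α a - K1 a) ↔ (Zp a ∧ 0 < δ1 a) := by
      intro a
      simp only [hδ1]
    rw [Finset.filter_congr (fun a _ => h2 a)] at this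
    exact_mod_cast this
  -- sign flip
  have hflip : ∀ a, Zp a → (0 < δ1 a ↔ ¬ (0 < δ0 a)) := by
    intro a haZ
    have haZf : a ∈ Zf := by rw [hZf, Finset.mem_filter]; exact ⟨Finset.mem_univ a, haZ⟩
    have h1 : |(t:ℝ) * rr α a - Kt a| < min (ε/2) (η/2) := hKt a
    have h2 : η ≤ |δ0 a| := hηle a haZf
    have h3 : δ0 a ≠ 0 := hδ0ne a haZf
    have h4 := hδ1eq a
    have h5 : |(t:ℝ) * rr α a - Kt a| < η/2 := lt_of_lt_of_le h1 (min_le_right _ _)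
    rw [abs_lt] at h5
    rcases lt_or_gt_of_ne h3 with hneg | hpos
    · -- δ0 < 0, so |δ0| = -δ0, δ1 > 0
      rw [abs_of_neg hneg] at h2
      constructor
      · intro _; linarith
      · intro _; rw [h4]; linarith
    · -- δ0 > 0, δ1 < 0
      rw [abs_of_pos hpos] at h2
      constructor
      · intro hcon
        rw [h4] at hcon
        linarith
      · intro hcon
        exact absurd hpos hcon
  have hsplit : (Finset.univ.filter (fun a => Zp a ∧ 0 < δ0 a)).card
      + (Finset.univ.filter (fun a => Zp a ∧ 0 < δ1 a)).card = Zf.card := by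
    have e0 : Finset.univ.filter (fun a => Zp a ∧ 0 < δ0 a) = Zf.filter (fun a => 0 < δ0 a) := by
      rw [hZf, Finset.filter_filter]
    have e1 : Finset.univ.filter (fun a => Zp a ∧ 0 < δ1 a)
        = Zf.filter (fun a => ¬ (0 < δ0 a)) := by
      rw [hZf, Finset.filter_filter]
      apply Finset.filter_congr
      intro a _
      constructor
      · rintro ⟨hZa, hd⟩; exact ⟨hZa, (hflip a hZa).mp hd⟩
      · rintro ⟨hZa, hd⟩; exact ⟨hZa, (hflip a hZa).mpr hd⟩
    rw [e0, e1]
    exact Finset.card_filter_add_card_filter_not _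
  have h2Ptot : 2 * PtotZ = (Zf.card : ℤ) := by omega
  -- at most one member of Zf has nonnegative ee (it would really cover 0)
  have hE : (Zf.filter (fun a => 0 ≤ ee α β a)).card ≤ 1 := by
    rw [Finset.card_le_one]
    intro a ha b hb
    rw [Finset.mem_filter, hZf, Finset.mem_filter] at ha hb
    obtain ⟨⟨_, hZa⟩, hea⟩ := ha
    obtain ⟨⟨_, hZb⟩, heb⟩ := hb
    -- both witness m = 0
    have hwit : ∀ c : Fin k, Zp c → 0 ≤ ee α β c →
        ((0:ℕ) : ℤ) = ⌊α c * (((ee α β c).toNat : ℕ) : ℝ) + β c⌋ := by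
      intro c hZc hec
      have hapos : (0:ℝ) < α c := lt_trans zero_lt_one (hα c)
      have hcf : cf0 α β c = 0 := hZc.1
      have hca : ca α β c = ((ee α β c : ℤ):ℝ) := by
        rw [cf0] at hcf
        linarith
      have htn : (((ee α β c).toNat : ℕ) : ℝ) = ((ee α β c : ℤ):ℝ) := by
        exact_mod_cast congrArg (fun z : ℤ => (z:ℝ)) (Int.toNat_of_nonneg hec)
      have hval : α c * (((ee α β c).toNat : ℕ) : ℝ) + β c = 0 := by
        rw [htn, ← hca]
        have : ca α β c = (0 - β c)/(α c) := by rw [ca, XX]; norm_num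
        rw [this]
        have hne0 : α c ≠ 0 := ne_of_gt hapos
        field_simp
        ring
      rw [hval]
      simp
    obtain ⟨p, hp, hu⟩ := hpart 0
    have e1 : ((a, (ee α β a).toNat) : Fin k × ℕ) = p := hu _ (hwit a hZa hea)
    have e2 : ((b, (ee α β b).toNat) : Fin k × ℕ) = p := hu _ (hwit b hZb heb)
    have := e1.trans e2.symm
    exact congrArg Prod.fst this
  -- Zf members with negative ee have positive Pt
  have hneg : ∀ a ∈ Zf.filter (fun a => ¬ (0 ≤ ee α β a)), 1 ≤ Pt α β a := by
    intro a ha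
    rw [Finset.mem_filter] at ha
    have h1 : ee α β a ≤ -1 := by omega
    rw [Pt, pc, max_eq_right (by omega : ee α β a ≤ 0)]
    omega
  have hsumZf : ((Zf.filter (fun a => ¬ (0 ≤ ee α β a))).card : ℤ) ≤ PtotZ := by
    calc ((Zf.filter (fun a => ¬ (0 ≤ ee α β a))).card : ℤ)
        = ∑ _a ∈ Zf.filter (fun a => ¬ (0 ≤ ee α β a)), (1:ℤ) := by
          rw [Finset.sum_const, nsmul_eq_mul, mul_one]
    _ ≤ ∑ a ∈ Zf.filter (fun a => ¬ (0 ≤ ee α β a)), Pt α β a := Finset.sum_le_sum hneg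
    _ ≤ ∑ a, Pt α β a := Finset.sum_le_sum_of_subset_of_nonneg
          (Finset.filter_subset _ _ |>.trans (by rw [hZf]; exact Finset.filter_subset _ _))
          (fun a _ _ => Pt_nonneg a)
    _ = PtotZ := hPtotZ.symm
  have hcards : (Zf.filter (fun a => 0 ≤ ee α β a)).card
      + (Zf.filter (fun a => ¬ (0 ≤ ee α β a))).card = Zf.card :=
    Finset.card_filter_add_card_filter_not _
  -- conclude Ptot = 1, #Zf = 2
  have hPtot_eq1 : PtotZ = 1 := by omega
  have hZf2 : Zf.card = 2 := by omega
  -- concentration: all letters except abad have Pt = 0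
  have hconc : ∀ a : Fin k, a ≠ abad → Pt α β a = 0 := by
    intro a hne
    have h1 : ∑ b ∈ Finset.univ.erase abad, Pt α β b = PtotZ - Pt α β abad := by
      rw [hPtotZ]
      rw [← Finset.sum_erase_add _ _ (Finset.mem_univ abad)]
      ring
    have h2 : ∑ b ∈ Finset.univ.erase abad, Pt α β b ≤ 0 := by omega
    have h3 : ∀ b ∈ Finset.univ.erase abad, Pt α β b = 0 := by
      have h4 : ∑ b ∈ Finset.univ.erase abad, Pt α β b = 0 :=
        le_antisymm h2 (Finset.sum_nonneg (fun b _ => Pt_nonneg b))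
      intro b hb
      have h5 := (Finset.sum_eq_zero_iff_of_nonneg (fun b _ => Pt_nonneg b)).mp h4
      exact h5 b hb
    exact h3 a (Finset.mem_erase.mpr ⟨hne, Finset.mem_univ a⟩)
  -- pick a Zf member with negative ee: it must be abad
  have hex : 0 < (Zf.filter (fun a => ¬ (0 ≤ ee α β a))).card := by omega
  obtain ⟨z, hz⟩ := Finset.card_pos.mp hex
  have hz1 : 1 ≤ Pt α β z := hneg z hz
  have hzabad : z = abad := by
    by_contra hzz
    have := hconc z hzz
    omega
  rw [Finset.mem_filter] at hz
  have hzZf := hz.1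
  rw [hZf, Finset.mem_filter] at hzZf
  have hcfz : cf0 α β z = 0 := hzZf.2.1
  -- Pt abad = 1 forces ee abad = -1, and exactness gives ca abad = -1
  have hPtabad : Pt α β abad = 1 := by
    have h1 : ∑ b ∈ Finset.univ.erase abad, Pt α β b = PtotZ - Pt α β abad := by
      rw [hPtotZ, ← Finset.sum_erase_add _ _ (Finset.mem_univ abad)]
      ring
    have h2 : 0 ≤ ∑ b ∈ Finset.univ.erase abad, Pt α β b :=
      Finset.sum_nonneg (fun b _ => Pt_nonneg b)
    omega
  have heabad : ee α β abad = -1 := by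
    have := hPtabad
    rw [Pt, pc, max_eq_right (by omega : ee α β abad ≤ 0)] at this
    omega
  have hcfabad : cf0 α β abad = 0 := by rw [← hzabad]; exact hcfz
  have hca1 : ca α β abad = -1 := by
    rw [cf0, heabad] at hcfabad
    push_cast at hcfabad
    linarith
  linarith






lemma cnt_bounds
    (hα : ∀ i, 1 < α i)
    (hpart : ∀ m : ℕ, ∃! p : Fin k × ℕ, (m : ℤ) = ⌊α p.1 * p.2 + β p.1⌋)
    (hs : ∀ m : ℕ, ∃ n : ℕ, (m : ℤ) = ⌊α (s m) * n + β (s m)⌋)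
    (hkey : ∀ a : Fin k, (-1:ℝ) ≤ ca α β a)
    (a : Fin k) (L m : ℕ) :
    max 0 (⌈(L:ℝ) * rr α a⌉ - 1) ≤ (cnt s a m L : ℤ)
      ∧ (cnt s a m L : ℤ) ≤ ⌈(L:ℝ) * rr α a⌉ := by
  have hapos : (0:ℝ) < α a := lt_trans zero_lt_one (hα a)
  have hrpos : (0:ℝ) < rr α a := by rw [rr]; positivity
  set t : ℝ := (L:ℝ) * rr α a with htdef
  have ht0 : 0 ≤ t := by positivity
  have htceil0 : 0 ≤ ⌈t⌉ := Int.ceil_nonneg ht0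
  set x : ℝ := XX α β a m with hxdef
  set y : ℝ := XX α β a (m + L) with hydef
  have hyx : y = x + t := by
    rw [hydef, hxdef, XX_eq hα, XX_eq hα, htdef]
    push_cast
    ring
  have hx1 : (-1:ℝ) ≤ x := le_trans (hkey a) (xx_mono hα a (Nat.zero_le m))
  have hxy : x ≤ y := by rw [hyx]; linarith
  have hM := master hα hpart hs a m L
  have hcnt : (cnt s a m L : ℤ) = pc ⌈y⌉ - pc ⌈x⌉ := by rw [hM]; rfl
  rw [hcnt]
  have hcm : ⌈x⌉ ≤ ⌈y⌉ := Int.ceil_mono hxy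
  constructor
  · -- lower bound
    apply max_le
    · have := pc_mono hcm
      omega
    · rcases le_or_gt 0 ⌈x⌉ with h | h
      · rw [pc_of_nonneg h, pc_of_nonneg (le_trans h hcm)]
        have h1 : ⌈x⌉ + ⌈t⌉ - 2 < ⌈y⌉ := by
          rw [Int.lt_ceil]
          push_cast
          rw [hyx]
          linarith [Int.ceil_lt_add_one x, Int.ceil_lt_add_one t]
        omega
      · -- ⌈x⌉ = -1, x = -1
        have hxm1 : ⌈x⌉ = -1 := by
          have h2 : (-1:ℤ) ≤ ⌈x⌉ := by
            calc (-1:ℤ) = ⌈(-1:ℝ)⌉ := by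
                  rw [show ((-1:ℝ)) = ((-1:ℤ):ℝ) by norm_num, Int.ceil_intCast]
            _ ≤ ⌈x⌉ := Int.ceil_mono hx1
          omega
        have hxe : x = -1 := by
          have h3 := Int.le_ceil x
          rw [hxm1] at h3
          push_cast at h3
          linarith
        have hy1 : ⌈y⌉ = ⌈t⌉ - 1 := by
          rw [hyx, hxe]
          rw [show (-1:ℝ) + t = t - 1 by ring]
          rw [show (⌈t⌉ - 1 : ℤ) = ⌈t⌉ + (-1) by ring]
          rw [show (t - 1 : ℝ) = t + (-1:ℤ) by push_cast; ring]
          exact Int.ceil_add_intCast t (-1)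
        have hpcx : pc ⌈x⌉ = 0 := by rw [hxm1]; rfl
        rw [hpcx, hy1]
        have := le_pc (⌈t⌉ - 1)
        omega
  · -- upper bound
    rcases le_or_gt ⌈y⌉ 0 with h | h
    · have hpcy : pc ⌈y⌉ = 0 := max_eq_right h
      have := pc_nonneg ⌈x⌉
      omega
    · rw [pc_of_nonneg h.le]
      have h1 : ⌈y⌉ ≤ ⌈x⌉ + ⌈t⌉ := by
        rw [hyx]
        exact Int.ceil_add_le x t
      have := le_pc ⌈x⌉
      omega

lemma balance
    (hα : ∀ i, 1 < α i)
    (hpart : ∀ m : ℕ, ∃! p : Fin k × ℕ, (m : ℤ) = ⌊α p.1 * p.2 + β p.1⌋)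
    (hs : ∀ m : ℕ, ∃ n : ℕ, (m : ℤ) = ⌊α (s m) * n + β (s m)⌋)
    (hkey : ∀ a : Fin k, (-1:ℝ) ≤ ca α β a)
    (a : Fin k) (m n L : ℕ) :
    |(cnt s a m L : ℤ) - (cnt s a n L : ℤ)| ≤ 1 := by
  obtain ⟨h1, h2⟩ := cnt_bounds hα hpart hs hkey a L m
  obtain ⟨h3, h4⟩ := cnt_bounds hα hpart hs hkey a L n
  have h5 : (0:ℤ) ≤ ⌈(L:ℝ) * rr α a⌉ := by
    have hrpos : (0:ℝ) < rr α a := by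
      rw [rr]
      have := lt_trans zero_lt_one (hα a)
      positivity
    apply Int.ceil_nonneg
    positivity
  have h6 : ⌈(L:ℝ) * rr α a⌉ - 1 ≤ (cnt s a m L : ℤ) := le_trans (le_max_right _ _) h1
  have h7 : (0:ℤ) ≤ (cnt s a m L : ℤ) := le_trans (le_max_left _ _) h1
  have h8 : ⌈(L:ℝ) * rr α a⌉ - 1 ≤ (cnt s a n L : ℤ) := le_trans (le_max_right _ _) h3
  have h9 : (0:ℤ) ≤ (cnt s a n L : ℤ) := le_trans (le_max_left _ _) h3
  rw [abs_le]
  omega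

lemma density
    (hα : ∀ i, 1 < α i)
    (hpart : ∀ m : ℕ, ∃! p : Fin k × ℕ, (m : ℤ) = ⌊α p.1 * p.2 + β p.1⌋)
    (hs : ∀ m : ℕ, ∃ n : ℕ, (m : ℤ) = ⌊α (s m) * n + β (s m)⌋)
    (a : Fin k) :
    Filter.Tendsto (fun n : ℕ => ((cnt s a 0 n : ℕ) : ℝ) / n)
      Filter.atTop (nhds (rr α a)) := by
  obtain ⟨hσ, N1, hceil⟩ := prelim (s := s) hα hpart hs
  set A0 : ℝ := ((pcei α β a 0 : ℤ) : ℝ) with hA0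
  set C : ℝ := |ca α β a| + |A0| + 1 with hC
  have hmain : ∀ n : ℕ, max N1 1 ≤ n → |((cnt s a 0 n : ℕ) : ℝ)/n - rr α a| ≤ C * (1/n) := by
    intro n hn
    have hnN1 : N1 ≤ n := le_trans (le_max_left _ _) hn
    have hn1 : 1 ≤ n := le_trans (le_max_right _ _) hn
    have hnpos : (0:ℝ) < n := by exact_mod_cast hn1
    have hM := master hα hpart hs a 0 n
    rw [Nat.zero_add] at hM
    have hpc : pcei α β a n = ⌈XX α β a n⌉ := hceil n hnN1 a
    have hcR : ((cnt s a 0 n : ℕ) : ℝ) = ((⌈XX α β a n⌉ : ℤ) : ℝ) - A0 := by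
      rw [hA0]
      rw [← hpc]
      exact_mod_cast congrArg (fun z : ℤ => (z:ℝ)) hM
    have hX : XX α β a n = (n:ℝ) * rr α a + ca α β a := XX_eq hα a n
    have hub := Int.ceil_lt_add_one (XX α β a n)
    have hlb := Int.le_ceil (XX α β a n)
    have h1 : ((cnt s a 0 n : ℕ) : ℝ)/n - rr α a
        = (((⌈XX α β a n⌉ : ℤ) : ℝ) - ((n:ℝ) * rr α a) - A0) / n := by
      rw [hcR]
      field_simp
      ring
    rw [h1]
    rw [abs_div, abs_of_pos hnpos, div_le_iff₀ hnpos]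
    rw [hC]
    have h2 : |((⌈XX α β a n⌉ : ℤ) : ℝ) - ((n:ℝ) * rr α a) - A0|
        ≤ |ca α β a| + |A0| + 1 := by
      rw [abs_le]
      have h3 := abs_nonneg (ca α β a)
      have h4 := le_abs_self (ca α β a)
      have h5 := neg_abs_le (ca α β a)
      have h6 := le_abs_self A0
      have h7 := neg_abs_le A0
      constructor <;> linarith [hub, hlb, hX]
    calc |((⌈XX α β a n⌉ : ℤ) : ℝ) - ((n:ℝ) * rr α a) - A0|
        ≤ |ca α β a| + |A0| + 1 := h2
    _ = (|ca α β a| + |A0| + 1) * (1/(n:ℝ)) * n := by field_simp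
  have hzero : Filter.Tendsto (fun n : ℕ => ((cnt s a 0 n : ℕ) : ℝ)/n - rr α a)
      Filter.atTop (nhds 0) := by
    have hg : Filter.Tendsto (fun n : ℕ => C * (1/(n:ℝ))) Filter.atTop (nhds 0) := by
      have h8 : Filter.Tendsto (fun n : ℕ => (1:ℝ)/n) Filter.atTop (nhds 0) :=
        tendsto_one_div_atTop_nhds_zero_nat
      have h9 := h8.const_mul C
      simpa using h9
    have hev : ∀ᶠ n : ℕ in Filter.atTop,
        ‖((cnt s a 0 n : ℕ) : ℝ)/n - rr α a‖ ≤ C * (1/(n:ℝ)) := by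
      filter_upwards [Filter.eventually_ge_atTop (max N1 1)] with n hn
      rw [Real.norm_eq_abs]
      exact hmain n hn
    exact squeeze_zero_norm' hev hg
  have h10 := hzero.add_const (rr α a)
  simp only [sub_add_cancel, zero_add] at h10
  exact h10

end Stmt4

/-- If Beatty sequences `⌊α i * n + β i⌋` (all `α i > 1`) partition ℕ, then the sequence
`s` assigning to each `m` the index of the sequence containing it is balanced, and the
density of each letter `i` is `1 / α i`. -/
theorem stmt_4 (k : ℕ) (α β : Fin k → ℝ) (hα : ∀ i, 1 < α i)
    (hpart : ∀ m : ℕ, ∃! p : Fin k × ℕ, (m : ℤ) = ⌊α p.1 * p.2 + β p.1⌋)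
    (s : ℕ → Fin k)
    (hs : ∀ m : ℕ, ∃ n : ℕ, (m : ℤ) = ⌊α (s m) * n + β (s m)⌋) :
    (∀ (a : Fin k) (m n len : ℕ),
      |(((Finset.range len).filter (fun t => s (m + t) = a)).card : ℤ) -
        (((Finset.range len).filter (fun t => s (n + t) = a)).card : ℤ)| ≤ 1) ∧
    (∀ a : Fin k, Filter.Tendsto
      (fun n => (((Finset.range n).filter (fun t => s t = a)).card : ℝ) / n)
      Filter.atTop (nhds (1 / α a))) := by
  have hkey := Stmt4.key hα hpart hs
  constructor
  · intro a m n len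
    exact Stmt4.balance hα hpart hs hkey a m n len
  · intro a
    have h := Stmt4.density hα hpart hs a
    have hone : (1:ℝ)/α a = Stmt4.rr α a := by rw [Stmt4.rr, one_div]
    rw [hone]
    have hfix : ∀ n : ℕ, Stmt4.cnt s a 0 n = ((Finset.range n).filter (fun t => s t = a)).card := by
      intro n
      simp [Stmt4.cnt]
    have hfun : (fun n : ℕ => (((Finset.range n).filter (fun t => s t = a)).card : ℝ)/n)
        = (fun n : ℕ => ((Stmt4.cnt s a 0 n : ℕ):ℝ)/n) := by
      funext n
      rw [hfix n]
    rw [hfun]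
    exact h
end

section
/- Suppose positive reals d_1, …, d_k with ∑ d_i = 1 satisfy: for every positive integer t, ∑_{i=1}^k ⌊t·d_i⌉ = t, where ⌊x⌉ denotes rounding to the nearest integer (with t·d_i never a half-integer). Then the sequences {⌊n/d_i + 1/(2d_i)⌋}_{n=0}^∞, for i = 1,…,k, partition ℕ. -/
lemma aux_exactly_one {k : ℕ} (f : Fin k → ℤ) (h0 : ∀ i, 0 ≤ f i) (h1 : ∀ i, f i ≤ 1)
    (hs : ∑ i, f i = 1) : ∃! i, f i = 1 := by
  have hex : ∃ i, f i = 1 := by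
    by_contra h
    push_neg at h
    have : ∑ i, f i = 0 := Finset.sum_eq_zero fun i _ => by
      have := h0 i; have := h1 i; have := h i; omega
    omega
  obtain ⟨i, hi⟩ := hex
  refine ⟨i, hi, fun j hj => ?_⟩
  by_contra hne
  have hsub : ({j, i} : Finset (Fin k)) ⊆ Finset.univ := Finset.subset_univ _
  have h2 : ∑ x ∈ ({j, i} : Finset (Fin k)), f x ≤ ∑ x, f x :=
    Finset.sum_le_sum_of_subset_of_nonneg hsub (fun x _ _ => h0 x)
  rw [Finset.sum_pair hne] at h2
  omega

lemma aux_floor_iff {d : ℝ} (hd : 0 < d) (m n : ℕ) :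
    (m : ℤ) = ⌊(n : ℝ) / d + 1 / (2 * d)⌋ ↔
      (m : ℝ) * d ≤ (n : ℝ) + 1/2 ∧ (n : ℝ) + 1/2 < ((m : ℝ) + 1) * d := by
  have h : (n : ℝ) / d + 1 / (2 * d) = ((n : ℝ) + 1/2) / d := by
    field_simp
  rw [h, eq_comm, Int.floor_eq_iff, le_div_iff₀ hd, div_lt_iff₀ hd]
  constructor
  · rintro ⟨h1, h2⟩
    constructor
    · push_cast at h1; linarith
    · push_cast at h2; linarith
  · rintro ⟨h1, h2⟩
    constructor
    · push_cast; linarith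
    · push_cast; linarith

/-- If positive reals `d i` summing to 1 satisfy `∑ i, round (t * d i) = t` for every
positive integer `t` (with `t * d i` never a half-integer), then the sequences
`⌊n / d i + 1/(2 d i)⌋` partition ℕ. -/
theorem stmt_6 (k : ℕ) (d : Fin k → ℝ) (hpos : ∀ i, 0 < d i) (hsum : ∑ i, d i = 1)
    (hhalf : ∀ (t : ℕ) (i : Fin k), 0 < t → ¬ ∃ z : ℤ, (t : ℝ) * d i = (z : ℝ) + 1/2)
    (hround : ∀ t : ℕ, 0 < t → ∑ i, round ((t : ℝ) * d i) = (t : ℤ)) :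
    ∀ m : ℕ, ∃! p : Fin k × ℕ, (m : ℤ) = ⌊(p.2 : ℝ) / d p.1 + 1 / (2 * d p.1)⌋ := by
  intro m
  have hd1 : ∀ i, d i ≤ 1 := fun i => by
    calc d i ≤ ∑ j, d j := Finset.single_le_sum (fun j _ => (hpos j).le) (Finset.mem_univ i)
    _ = 1 := hsum
  set a : Fin k → ℤ := fun i => ⌊(m : ℝ) * d i + 1/2⌋ with ha
  set b : Fin k → ℤ := fun i => ⌊((m : ℝ) + 1) * d i + 1/2⌋ with hb
  -- sums
  have hsa : ∑ i, a i = (m : ℤ) := by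
    rcases Nat.eq_zero_or_pos m with h | h
    · subst h
      simp only [ha, Nat.cast_zero, zero_mul, zero_add]
      norm_num
    · have := hround m h
      simp only [round_eq] at this
      exact this
  have hsb : ∑ i, b i = (m : ℤ) + 1 := by
    have := hround (m + 1) m.succ_pos
    simp only [round_eq] at this
    push_cast at this ⊢
    convert this using 2 with i
  -- jump bounds
  have hab0 : ∀ i, a i ≤ b i := fun i => by
    apply Int.floor_le_floor
    have := (hpos i).le
    nlinarith
  have hab1 : ∀ i, b i ≤ a i + 1 := fun i => by
    have : ((m : ℝ) + 1) * d i + 1/2 ≤ ((m : ℝ) * d i + 1/2) + 1 := by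
      have := hd1 i; nlinarith
    calc b i ≤ ⌊((m : ℝ) * d i + 1/2) + 1⌋ := Int.floor_le_floor this
      _ = a i + 1 := Int.floor_add_one _
  -- half-integer exclusions
  have hhalf1 : ∀ i (z : ℤ), (m : ℝ) * d i ≠ (z : ℝ) + 1/2 := by
    intro i z hz
    rcases Nat.eq_zero_or_pos m with h | h
    · subst h
      simp only [Nat.cast_zero, zero_mul] at hz
      have h2 : ((2 * z : ℤ) : ℝ) = -1 := by push_cast; linarith
      have : (2 * z : ℤ) = -1 := by exact_mod_cast h2
      omega
    · exact hhalf m i h ⟨z, hz⟩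
  have hhalf2 : ∀ i (z : ℤ), ((m : ℝ) + 1) * d i ≠ (z : ℝ) + 1/2 := by
    intro i z hz
    apply hhalf (m + 1) i m.succ_pos
    exact ⟨z, by push_cast; linarith [hz]⟩
  -- forward: any solution pins down n = a i and a jump at i
  have fwd : ∀ (i : Fin k) (n : ℕ), (m : ℤ) = ⌊(n : ℝ) / d i + 1 / (2 * d i)⌋ →
      (n : ℤ) = a i ∧ b i = a i + 1 := by
    intro i n hP
    obtain ⟨h1, h2⟩ := (aux_floor_iff (hpos i) m n).mp hP
    have hne : (m : ℝ) * d i + 1/2 ≠ (n : ℝ) + 1 := by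
      intro h
      exact hhalf1 i n (by push_cast; linarith)
    have hlt : (m : ℝ) * d i + 1/2 < (n : ℝ) + 1 := lt_of_le_of_ne (by linarith) hne
    have han : a i ≤ (n : ℤ) := by
      have : a i < (n : ℤ) + 1 := Int.floor_lt.mpr (by push_cast; linarith)
      omega
    have hbn : (n : ℤ) + 1 ≤ b i := by
      apply Int.le_floor.mpr
      push_cast
      linarith
    have := hab1 i
    constructor
    · omega
    · omega
  -- backward: a jump at i gives a solution with n = (a i).toNat
  have ha0 : ∀ i, 0 ≤ a i := fun i => by
    apply Int.floor_nonneg.mpr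
    have := (hpos i).le
    have : 0 ≤ (m : ℝ) * d i := by positivity
    linarith
  have bwd : ∀ i : Fin k, b i = a i + 1 →
      (m : ℤ) = ⌊((a i).toNat : ℝ) / d i + 1 / (2 * d i)⌋ := by
    intro i hjump
    rw [aux_floor_iff (hpos i) m (a i).toNat]
    have htn : (((a i).toNat : ℕ) : ℝ) = ((a i : ℤ) : ℝ) := by
      exact_mod_cast congrArg (Int.cast : ℤ → ℝ) (Int.toNat_of_nonneg (ha0 i))
    rw [htn]
    constructor
    · have := Int.sub_one_lt_floor ((m : ℝ) * d i + 1/2)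
      simp only [ha] at this ⊢
      linarith
    · have hfl : ((a i : ℤ) : ℝ) + 1 ≤ ((m : ℝ) + 1) * d i + 1/2 := by
        have h1 := Int.floor_le (((m : ℝ) + 1) * d i + 1/2)
        have h2 : ((b i : ℤ) : ℝ) = ((a i : ℤ) : ℝ) + 1 := by rw [hjump]; push_cast; ring
        simp only [hb] at h2
        linarith
      have hne : ((a i : ℤ) : ℝ) + 1/2 ≠ ((m : ℝ) + 1) * d i := by
        intro h
        exact hhalf2 i (a i) h.symm
      have : ((a i : ℤ) : ℝ) + 1/2 ≤ ((m : ℝ) + 1) * d i := by linarith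
      exact lt_of_le_of_ne this hne
  -- exactly one jump
  have hsum1 : ∑ i, (b i - a i) = 1 := by
    rw [Finset.sum_sub_distrib, hsa, hsb]; ring
  obtain ⟨i0, hi0, hi0u⟩ := aux_exactly_one (fun i => b i - a i)
    (fun i => show (0:ℤ) ≤ b i - a i by have := hab0 i; omega)
    (fun i => show b i - a i ≤ 1 by have := hab1 i; omega) hsum1
  have hi0' : b i0 - a i0 = 1 := hi0
  have hjump0 : b i0 = a i0 + 1 := by omega
  refine ⟨(i0, (a i0).toNat), bwd i0 hjump0, ?_⟩
  rintro ⟨j, n⟩ hP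
  obtain ⟨hn, hj⟩ := fwd j n hP
  have hji : j = i0 := hi0u j (show b j - a j = 1 by omega)
  subst hji
  have : n = (a j).toNat := by omega
  simp [this]
end

section
/- Let α > 0 and suppose αn + α/2 is never an integer for any n ∈ ℕ. If m = ⌊αn + α/2⌋ for some n ∈ ℕ and α = p/q with p = αq, then p − 1 − m = ⌊α(q − n − 1) + α/2⌋. -/
theorem Int.floor_intCast_sub_of_notMem {R : Type*} [Ring R] [LinearOrder R] [IsOrderedRing R]
    [FloorRing R] {a : R} (ha : a ∉ Set.range Int.cast) (z : ℤ) :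
    ⌊(z : R) - a⌋ = z - 1 - ⌊a⌋ := by
  rw [← neg_sub, Int.floor_neg, Int.ceil_sub_intCast,
    (Int.ceil_eq_floor_add_one_iff_notMem a).2 ha]
  ring

theorem stmt_9_general (α : ℝ) (hint : ∀ n : ℕ, ¬ ∃ z : ℤ, α * n + α / 2 = (z : ℝ))
    (p q : ℕ) (hpq : (p : ℝ) = α * q) (n : ℕ)
    (m : ℤ) (hm : m = ⌊α * n + α / 2⌋) :
    (p : ℤ) - 1 - m = ⌊α * ((q : ℝ) - (n : ℝ) - 1) + α / 2⌋ := by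
  have hx : α * n + α / 2 ∉ Set.range Int.cast := fun ⟨z, hz⟩ => hint n ⟨z, hz.symm⟩
  have hsymm : α * ((q : ℝ) - n - 1) + α / 2 = ((p : ℤ) : ℝ) - (α * n + α / 2) := by
    rw [Int.cast_natCast, hpq]
    ring
  rw [hsymm, Int.floor_intCast_sub_of_notMem hx, hm]

/-- Symmetry of the period: if `α * n + α/2` is never an integer, `p = α * q`, and
`m = ⌊α * n + α/2⌋` with `n < q`, then `p - 1 - m = ⌊α * (q - n - 1) + α/2⌋`. -/
theorem stmt_9 (α : ℝ) (hα : 0 < α) (hint : ∀ n : ℕ, ¬ ∃ z : ℤ, α * n + α / 2 = (z : ℝ))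
    (p q : ℕ) (hq : 0 < q) (hpq : (p : ℝ) = α * q) (n : ℕ) (hn : n < q)
    (m : ℤ) (hm : m = ⌊α * n + α / 2⌋) :
    (p : ℤ) - 1 - m = ⌊α * ((q : ℝ) - (n : ℝ) - 1) + α / 2⌋ :=
  stmt_9_general α hint p q hpq n m hm
end

section
/- Let k ≥ 3 and α_1 < … < α_k be positive reals. If αn + α/2 is an integer for some α = α_{j} and some n ∈ ℕ, then the Beatty sequences {⌊α_i n + α_i/2⌋}_{n=0}^∞, i = 1,…,k, do not partition ℕ, given that all α_i are rational with common numerator p (i.e., α_i = p/q_i in lowest-term lcm form). -/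
/-!
If the sequences `⌊α_i n + α_i/2⌋` partition ℕ, then counting the terms below `N` gives
`∑ᵢ ⌈N/α_i - 1/2⌉ = N` for every `N`. For `α_i = p/q_i` the summand is `c_i(N) = ⌈N q_i/p - 1/2⌉`;
`N = p` gives `∑ q_i = p`, and with `y = N q_i/p - 1/2` the reflection `N ↦ p - N` gives
`c_i(N) + c_i(p - N) = q_i - 1 + ⌈y⌉ - ⌊y⌋ ≤ q_i`, strictly when `y` is an integer. Summing,
`p < ∑ q_i = p` as soon as some `N q_j/p - 1/2` is an integer, and `α_j n + α_j/2 = z ∈ ℤ` says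
exactly that for `N = z` (reduced mod `p`).
-/

open Finset

theorem sum_toNat_eq_of_partition {ι : Type*} [Fintype ι] (f : ι → ℕ → ℤ) (T : ι → ℕ → ℤ)
    (hf : ∀ i n, 0 ≤ f i n) (hT : ∀ i n (N : ℕ), f i n < N ↔ (n : ℤ) < T i N)
    (H : ∀ m : ℕ, ∃! pr : ι × ℕ, (m : ℤ) = f pr.1 pr.2) (N : ℕ) :
    ∑ i, (T i N).toNat = N := by
  set S := univ.sigma fun i => range (T i N).toNat
  have hS : ∀ i n, (⟨i, n⟩ : Σ _ : ι, ℕ) ∈ S ↔ f i n < N := fun i n => by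
    simp [S, Int.lt_toNat, hT]
  have hval : ∀ i n, ((f i n).toNat : ℤ) = f i n := fun i n => Int.toNat_of_nonneg (hf i n)
  calc ∑ i, (T i N).toNat = #S := by simp [S]
    _ = #(range N) := by
      refine card_bij (fun x _ => (f x.1 x.2).toNat) ?_ ?_ ?_
      · rintro ⟨i, n⟩ hx
        have := (hS i n).1 hx
        rw [mem_range, ← Nat.cast_lt (α := ℤ), hval]
        exact this
      · rintro ⟨i, n⟩ - ⟨i', n'⟩ - he
        have := (H (f i n).toNat).unique (y₁ := (i, n)) (y₂ := (i', n')) (hval i n)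
          (he ▸ hval i' n')
        obtain ⟨rfl, rfl⟩ := Prod.mk.inj this
        rfl
      · intro m hm
        obtain ⟨⟨i, n⟩, hm', -⟩ := H m
        refine ⟨⟨i, n⟩, (hS i n).2 (hm' ▸ by simpa using hm), ?_⟩
        simp [← hm']
    _ = N := card_range N

theorem floor_mul_add_half_lt_iff {α : ℝ} (hα : 0 < α) (n : ℕ) (N : ℤ) :
    ⌊α * n + α / 2⌋ < N ↔ (n : ℤ) < ⌈N / α - 1 / 2⌉ := by
  rw [Int.floor_lt, Int.lt_ceil, lt_sub_iff_add_lt, lt_div_iff₀ hα]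
  constructor <;> intro h <;> push_cast at h ⊢ <;> linarith

theorem sum_ceil_sub_half_eq_of_partition {ι : Type*} [Fintype ι] {α : ι → ℝ}
    (hα : ∀ i, 0 < α i) (H : ∀ m : ℕ, ∃! pr : ι × ℕ, (m : ℤ) = ⌊α pr.1 * pr.2 + α pr.1 / 2⌋)
    (N : ℕ) : ∑ i, ⌈N / α i - 1 / 2⌉ = N := by
  have hcount := sum_toNat_eq_of_partition (fun i n => ⌊α i * n + α i / 2⌋)
    (fun i N => ⌈(N : ℝ) / α i - 1 / 2⌉)
    (fun i n => Int.floor_nonneg.mpr (by have := hα i; positivity))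
    (fun i n N => by simpa using floor_mul_add_half_lt_iff (hα i) n N) H N
  have hnonneg : ∀ i, 0 ≤ ⌈(N : ℝ) / α i - 1 / 2⌉ := fun i =>
    Int.le_ceil_iff.mpr (by have := div_nonneg N.cast_nonneg (hα i).le; push_cast; linarith)
  rw [← Nat.cast_inj (R := ℤ), Nat.cast_sum] at hcount
  rwa [sum_congr rfl fun i _ => Int.toNat_of_nonneg (hnonneg i)] at hcount

theorem ceil_intCast_sub_sub_half (q : ℤ) (x : ℝ) :
    ⌈q - x - 1 / 2⌉ = q - 1 - ⌊x - 1 / 2⌋ := by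
  rw [show (q : ℝ) - x - 1 / 2 = -(x - 1 / 2) + ((q - 1 : ℤ) : ℝ) by push_cast; ring,
    Int.ceil_add_intCast, Int.ceil_neg]
  ring

theorem ceil_sub_half_add_ceil_intCast_sub_sub_half_le (q : ℤ) (x : ℝ) :
    ⌈x - 1 / 2⌉ + ⌈q - x - 1 / 2⌉ ≤ q := by
  rw [ceil_intCast_sub_sub_half]
  linarith [Int.ceil_le_floor_add_one (x - 1 / 2)]

theorem ceil_sub_half_add_ceil_intCast_sub_sub_half_lt (q m : ℤ) {x : ℝ} (hx : x - 1 / 2 = m) :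
    ⌈x - 1 / 2⌉ + ⌈q - x - 1 / 2⌉ < q := by
  rw [ceil_intCast_sub_sub_half, hx, Int.ceil_intCast, Int.floor_intCast]
  omega

section RationalBeatty

variable {ι : Type*} [Fintype ι] {p : ℕ} {q : ι → ℕ}

theorem sum_natCast_eq_of_sum_ceil_eq (hp : p ≠ 0)
    (h : ∀ N : ℕ, ∑ i, ⌈(N : ℝ) * q i / p - 1 / 2⌉ = N) : ∑ i, (q i : ℤ) = p := by
  rw [← h p]
  refine sum_congr rfl fun i _ => ?_
  rw [mul_div_cancel_left₀ _ (by exact_mod_cast hp), eq_comm, Int.ceil_eq_iff]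
  push_cast
  constructor <;> linarith

theorem ne_intCast_of_sum_ceil_eq_of_le (hp : p ≠ 0)
    (h : ∀ N : ℕ, ∑ i, ⌈(N : ℝ) * q i / p - 1 / 2⌉ = N) {N : ℕ} (hN : N ≤ p) (j : ι) (m : ℤ) :
    (N : ℝ) * q j / p - 1 / 2 ≠ m := by
  intro hm
  have hreflect : ∀ i, ((p - N : ℕ) : ℝ) * q i / p = q i - N * q i / p := fun i => by
    push_cast [Nat.cast_sub hN]
    field_simp
  have : (p : ℤ) < p := calc
    (p : ℤ) = ∑ i, (⌈(N : ℝ) * q i / p - 1 / 2⌉ + ⌈((p - N : ℕ) : ℝ) * q i / p - 1 / 2⌉) := by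
      rw [sum_add_distrib, h, h]
      omega
    _ < ∑ i, (q i : ℤ) := by
      refine sum_lt_sum (fun i _ => ?_) ⟨j, mem_univ j, ?_⟩ <;> rw [hreflect]
      · simpa using ceil_sub_half_add_ceil_intCast_sub_sub_half_le (q i) (N * q i / p)
      · simpa using ceil_sub_half_add_ceil_intCast_sub_sub_half_lt (q j) m hm
    _ = p := sum_natCast_eq_of_sum_ceil_eq hp h
  exact lt_irrefl _ this

theorem ne_intCast_of_sum_ceil_eq (hp : p ≠ 0)
    (h : ∀ N : ℕ, ∑ i, ⌈(N : ℝ) * q i / p - 1 / 2⌉ = N) (N : ℕ) (j : ι) (m : ℤ) :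
    (N : ℝ) * q j / p - 1 / 2 ≠ m := by
  have hN : (N : ℝ) = p * (N / p : ℕ) + (N % p : ℕ) := by exact_mod_cast (Nat.div_add_mod N p).symm
  intro hm
  refine ne_intCast_of_sum_ceil_eq_of_le hp h (Nat.mod_lt N (Nat.pos_of_ne_zero hp)).le j
    (m - (N / p : ℕ) * q j) ?_
  rw [hN] at hm
  rw [Int.cast_sub, Int.cast_mul, Int.cast_natCast, Int.cast_natCast]
  field_simp at hm ⊢
  linear_combination hm

end RationalBeatty

theorem stmt_10_general (k : ℕ) (α : Fin k → ℝ) (hpos : ∀ i, 0 < α i)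
    (p : ℕ) (hp : 0 < p) (q : Fin k → ℕ) (hq : ∀ i, 0 < q i)
    (hα : ∀ i, α i = (p : ℝ) / (q i : ℝ))
    (hint : ∃ (j : Fin k) (n : ℕ) (z : ℤ), α j * n + α j / 2 = (z : ℝ)) :
    ¬ ∀ m : ℕ, ∃! pr : Fin k × ℕ, (m : ℤ) = ⌊α pr.1 * pr.2 + α pr.1 / 2⌋ := by
  intro H
  obtain ⟨j, n, z, hz⟩ := hint
  have hcount : ∀ N : ℕ, ∑ i, ⌈(N : ℝ) * q i / p - 1 / 2⌉ = N := fun N => by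
    simpa [hα, div_div_eq_mul_div] using sum_ceil_sub_half_eq_of_partition hpos H N
  have hz0 : (0 : ℝ) ≤ z := by
    have := hpos j
    rw [← hz]
    positivity
  lift z to ℕ using by exact_mod_cast hz0
  refine ne_intCast_of_sum_ceil_eq hp.ne' hcount z j n ?_
  have hqj : (q j : ℝ) ≠ 0 := by exact_mod_cast (hq j).ne'
  rw [hα] at hz
  push_cast at hz ⊢
  field_simp at hz ⊢
  linear_combination -hz

/-- Case 2 of the proof of the special case of Fraenkel's conjecture: if all
`α i = p / q i` (common numerator `p`) and some `α j * n + α j / 2` is an integer, then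
the Beatty sequences `⌊α i * n + α i / 2⌋` do not partition ℕ. -/
theorem stmt_10 (k : ℕ) (hk : 3 ≤ k) (α : Fin k → ℝ) (hpos : ∀ i, 0 < α i)
    (hmono : StrictMono α) (p : ℕ) (hp : 0 < p) (q : Fin k → ℕ) (hq : ∀ i, 0 < q i)
    (hα : ∀ i, α i = (p : ℝ) / (q i : ℝ))
    (hint : ∃ (j : Fin k) (n : ℕ) (z : ℤ), α j * n + α j / 2 = (z : ℝ)) :
    ¬ ∀ m : ℕ, ∃! pr : Fin k × ℕ, (m : ℤ) = ⌊α pr.1 * pr.2 + α pr.1 / 2⌋ :=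
  stmt_10_general k α hpos p hp q hq hα hint
end

section
/- For any triple (d_1, d_2, d_3) of positive reals summing to 1 with d_1 = 1/2, and any two-colouring of the circle of unit perimeter, for every ε > 0 there is a monochromatic triple of points whose cyclic arc-distances are within ε of (d_1, d_2, d_3) in some order. -/
/-!
A locally constant two-colouring of the connected line is constant, so there is a point `p`
within `ε` of which every colour used by `c` occurs. Of the three points `p + d₁`, `p + d₀` and
`p + d₀ + d₁` two have the same colour, and together with `p` each such pair is an exact copy
of the triple in some order, because `d₁ + d₂ = d₀`. Replacing `p` by a nearby point of the
pair's colour gives the monochromatic `ε`-close copy.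
-/

/-- Arc-distance on the unit-perimeter circle modelled by ℝ. -/
noncomputable def arcDist (x y : ℝ) : ℝ := min (Int.fract (x - y)) (1 - Int.fract (x - y))

open Finset

lemma arcDist_le_dist (x y : ℝ) : arcDist x y ≤ dist x y := by
  rw [arcDist, Int.fract, Real.dist_eq]
  rcases le_or_gt 0 (x - y) with h | h
  · have : (0 : ℝ) ≤ ⌊x - y⌋ := by exact_mod_cast Int.floor_nonneg.mpr h
    rw [abs_of_nonneg h]
    exact (min_le_left _ _).trans (by linarith)
  · have : ⌊x - y⌋ < 0 := Int.floor_lt.mpr (by simpa using h)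
    have : (⌊x - y⌋ : ℝ) ≤ -1 := by exact_mod_cast Int.le_sub_one_of_lt this
    rw [abs_of_neg h]
    exact (min_le_right _ _).trans (by linarith)

lemma Bool.eq_or_eq_or_eq (a b c : Bool) : a = b ∨ a = c ∨ b = c := by
  cases a <;> cases b <;> cases c <;> simp

lemma exists_forall_exists_dist_le {X : Type*} [PseudoMetricSpace X] [PreconnectedSpace X]
    [Nonempty X] (c : X → Bool) {ε : ℝ} (hε : 0 < ε) :
    ∃ p, ∀ y, ∃ q, dist q p ≤ ε ∧ c q = c y := by
  by_contra! h
  have hc : IsLocallyConstant c := by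
    refine (IsLocallyConstant.iff_eventually_eq c).mpr fun p => ?_
    obtain ⟨y, hy⟩ := h p
    filter_upwards [Metric.closedBall_mem_nhds p hε] with q hq
    have hpy := hy p (by simpa using hε.le)
    have hqy := hy q hq
    revert hpy hqy
    cases c q <;> cases c p <;> cases c y <;> simp
  obtain ⟨x⟩ := ‹Nonempty X›
  obtain ⟨y, hy⟩ := h x
  exact hy x (by simpa using hε.le) (hc.apply_eq_of_preconnectedSpace x y)

def HasMonochromaticNearCopy (c : ℝ → Bool) (d : Fin 3 → ℝ) (ε : ℝ) : Prop :=
  ∃ (b : Bool) (x : ℝ) (σ : Equiv.Perm (Fin 3)) (q : Fin 3 → ℝ),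
    ∀ j : Fin 3, c (q j) = b ∧
      arcDist (q j) (x + ∑ i ∈ univ.filter (fun i => i < j), d (σ i)) ≤ ε

lemma hasMonochromaticNearCopy_of_forall_exists_dist_le {c : ℝ → Bool} {d : Fin 3 → ℝ}
    {ε p : ℝ} (hε : 0 ≤ ε) (hp : ∀ y, ∃ q, dist q p ≤ ε ∧ c q = c y) (σ : Equiv.Perm (Fin 3))
    (h : c (p + d (σ 0)) = c (p + (d (σ 0) + d (σ 1)))) :
    HasMonochromaticNearCopy c d ε := by
  obtain ⟨q, hq, hcq⟩ := hp (p + d (σ 0))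
  refine ⟨c (p + d (σ 0)), p, σ, ![q, p + d (σ 0), p + (d (σ 0) + d (σ 1))], ?_⟩
  have hexact : ∀ z, arcDist z z ≤ ε := fun z => (arcDist_le_dist z z).trans (by simpa using hε)
  intro j
  match j with
  | 0 => simpa using ⟨hcq, (arcDist_le_dist _ _).trans hq⟩
  | 1 =>
    refine ⟨rfl, ?_⟩
    rw [show univ.filter (fun i : Fin 3 => i < 1) = {0} by decide, sum_singleton]
    exact hexact _
  | 2 =>
    refine ⟨h.symm, ?_⟩
    rw [show univ.filter (fun i : Fin 3 => i < 2) = {0, 1} by decide, sum_pair (by decide)]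
    exact hexact _

theorem stmt_12_general (d : Fin 3 → ℝ) (hsum : ∑ i, d i = 1)
    (hd0 : d 0 = 1/2) (c : ℝ → Bool)
    (ε : ℝ) (hε : 0 < ε) :
    ∃ (b : Bool) (x : ℝ) (σ : Equiv.Perm (Fin 3)) (q : Fin 3 → ℝ),
      ∀ j : Fin 3, c (q j) = b ∧
        arcDist (q j) (x + ∑ i ∈ Finset.univ.filter (fun i => i < j), d (σ i)) ≤ ε := by
  have hd : d 1 + d 2 = d 0 := by rw [Fin.sum_univ_three] at hsum; linarith
  obtain ⟨p, hp⟩ := exists_forall_exists_dist_le c hε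
  rcases Bool.eq_or_eq_or_eq (c (p + d 1)) (c (p + d 0)) (c (p + (d 0 + d 1))) with h | h | h
  · exact hasMonochromaticNearCopy_of_forall_exists_dist_le hε.le hp (finRotate 3)
      (by simpa [hd] using h)
  · exact hasMonochromaticNearCopy_of_forall_exists_dist_le hε.le hp (Equiv.swap 0 1)
      (by simpa [add_comm] using h)
  · exact hasMonochromaticNearCopy_of_forall_exists_dist_le hε.le hp 1 (by simpa using h)

/-- Any triple of positive reals summing to 1 with `d 0 = 1/2` is nearly-Ramsey:
every 1-periodic two-colouring of ℝ contains, for every `ε > 0`, a monochromatic triple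
`ε`-close to a permuted copy of the triple. -/
theorem stmt_12 (d : Fin 3 → ℝ) (hpos : ∀ i, 0 < d i) (hsum : ∑ i, d i = 1)
    (hd0 : d 0 = 1/2) (c : ℝ → Bool) (hper : ∀ x, c (x + 1) = c x)
    (ε : ℝ) (hε : 0 < ε) :
    ∃ (b : Bool) (x : ℝ) (σ : Equiv.Perm (Fin 3)) (q : Fin 3 → ℝ),
      ∀ j : Fin 3, c (q j) = b ∧
        arcDist (q j) (x + ∑ i ∈ Finset.univ.filter (fun i => i < j), d (σ i)) ≤ ε :=
  stmt_12_general d hsum hd0 c ε hε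
end

section
/- The triple (5/8, 1/4, 1/8) is nearly-Ramsey: for every ε > 0 and every two-colouring of the circle of unit perimeter, there is a monochromatic triple of points forming an ε-close permuted copy of the triangle with arc side lengths 5/8, 1/4, 1/8. -/
lemma arcDist_self (x : ℝ) : arcDist x x = 0 := by simp [arcDist]

lemma arcDist_le_of_eq (y z ε : ℝ) (h : y = z) (hε : 0 ≤ ε) : arcDist y z ≤ ε := by
  subst h; rw [arcDist_self]; exact hε

lemma arcDist_le_of_abs (x y δ : ℝ) (h1 : |x - y| ≤ δ) (h2 : δ ≤ 1/2) : arcDist x y ≤ δ := by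
  have hδ : 0 ≤ δ := le_trans (abs_nonneg _) h1
  rcases abs_le.mp h1 with ⟨hl, hr⟩
  rcases le_or_gt 0 (x - y) with h | h
  · have hf : Int.fract (x - y) = x - y := Int.fract_eq_self.mpr ⟨h, by linarith⟩
    calc arcDist x y ≤ Int.fract (x - y) := min_le_left _ _
    _ ≤ δ := by rw [hf]; exact hr
  · have hf : Int.fract (x - y) = x - y + 1 := by
      rw [show Int.fract (x - y) = Int.fract (x - y + 1) from (Int.fract_add_one _).symm]
      exact Int.fract_eq_self.mpr ⟨by linarith, by linarith⟩
    calc arcDist x y ≤ 1 - Int.fract (x - y) := min_le_right _ _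
    _ ≤ δ := by rw [hf]; linarith

def permA : Equiv.Perm (Fin 3) := ⟨![2,1,0], ![2,1,0], by decide, by decide⟩
def permD : Equiv.Perm (Fin 3) := ⟨![1,2,0], ![2,0,1], by decide, by decide⟩
def permE : Equiv.Perm (Fin 3) := ⟨![2,0,1], ![1,2,0], by decide, by decide⟩

lemma build (c : ℝ → Bool) (ε : ℝ) (b : Bool) (σ : Equiv.Perm (Fin 3)) (x q0 q1 q2 : ℝ)
    (hc0 : c q0 = b) (hc1 : c q1 = b) (hc2 : c q2 = b)
    (hd0 : arcDist q0 x ≤ ε)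
    (hd1 : arcDist q1 (x + (![5/8,1/4,1/8] : Fin 3 → ℝ) (σ 0)) ≤ ε)
    (hd2 : arcDist q2 (x + ((![5/8,1/4,1/8] : Fin 3 → ℝ) (σ 0)
        + (![5/8,1/4,1/8] : Fin 3 → ℝ) (σ 1))) ≤ ε) :
    ∃ (b : Bool) (x : ℝ) (σ : Equiv.Perm (Fin 3)) (q : Fin 3 → ℝ),
      ∀ j : Fin 3, c (q j) = b ∧
        arcDist (q j)
          (x + ∑ i ∈ Finset.univ.filter (fun i => i < j),
            (![5/8, 1/4, 1/8] : Fin 3 → ℝ) (σ i)) ≤ ε := by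
  refine ⟨b, x, σ, ![q0,q1,q2], ?_⟩
  intro j
  fin_cases j <;>
    simp only [Finset.sum_filter, Fin.sum_univ_three, Fin.lt_def, Matrix.cons_val_zero,
      Matrix.cons_val_one, Matrix.head_cons] <;> norm_num
  · exact ⟨hc0, hd0⟩
  · exact ⟨hc1, hd1⟩
  · exact ⟨hc2, by convert hd2 using 3⟩

lemma permA0 : (![5/8,1/4,1/8] : Fin 3 → ℝ) (permA 0) = 1/8 := by
  simp [permA]
lemma permA01 : (![5/8,1/4,1/8] : Fin 3 → ℝ) (permA 0) + (![5/8,1/4,1/8] : Fin 3 → ℝ) (permA 1)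
    = 3/8 := by simp [permA]; norm_num
lemma permD0 : (![5/8,1/4,1/8] : Fin 3 → ℝ) (permD 0) = 1/4 := by
  simp [permD]
lemma permD01 : (![5/8,1/4,1/8] : Fin 3 → ℝ) (permD 0) + (![5/8,1/4,1/8] : Fin 3 → ℝ) (permD 1)
    = 3/8 := by simp [permD]; norm_num
lemma permE0 : (![5/8,1/4,1/8] : Fin 3 → ℝ) (permE 0) = 1/8 := by
  simp [permE]
lemma permE01 : (![5/8,1/4,1/8] : Fin 3 → ℝ) (permE 0) + (![5/8,1/4,1/8] : Fin 3 → ℝ) (permE 1)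
    = 3/4 := by simp [permE]; norm_num

lemma boolAux {a b d : Bool} (h1 : a ≠ d) (h2 : b ≠ d) : a = b := by
  cases a <;> cases b <;> cases d <;> simp_all

/-- The triple `(5/8, 1/4, 1/8)` is nearly-Ramsey. -/
theorem stmt_13 (c : ℝ → Bool) (hper : ∀ x, c (x + 1) = c x) (ε : ℝ) (hε : 0 < ε) :
    ∃ (b : Bool) (x : ℝ) (σ : Equiv.Perm (Fin 3)) (q : Fin 3 → ℝ),
      ∀ j : Fin 3, c (q j) = b ∧
        arcDist (q j)
          (x + ∑ i ∈ Finset.univ.filter (fun i => i < j),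
            (![5/8, 1/4, 1/8] : Fin 3 → ℝ) (σ i)) ≤ ε := by
  have hεnn : (0:ℝ) ≤ ε := le_of_lt hε
  by_cases hconst : ∀ x y : ℝ, c x = c y
  · exact build c ε (c 0) permA 0 0 (1/8) (3/8) (hconst _ _) (hconst _ _) (hconst _ _)
      (arcDist_le_of_eq _ _ _ (by norm_num) hεnn)
      (arcDist_le_of_eq _ _ _ (by rw [permA0]; norm_num) hεnn)
      (arcDist_le_of_eq _ _ _ (by rw [permA01]; norm_num) hεnn)
  · -- there are two colours; find a bichromatic point p
    push_neg at hconst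
    obtain ⟨a, b', hab⟩ := hconst
    have hp : Function.Periodic c 1 := hper
    set ε' : ℝ := min ε (1/4) with hε'def
    have hε'pos : 0 < ε' := lt_min hε (by norm_num)
    have hε'le : ε' ≤ ε := min_le_left _ _
    have hε'half : ε' ≤ 1/2 := le_trans (min_le_right _ _) (by norm_num)
    set b2 : ℝ := b' - ⌊b' - a⌋ with hb2def
    have hcb2 : c b2 = c b' := by
      have := hp.sub_int_mul_eq (x := b') (n := ⌊b' - a⌋)
      simpa using this
    have hab2 : c a ≠ c b2 := by rw [hcb2]; exact hab
    have ha2 : a < b2 := by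
      have h1 : a ≤ b2 := by
        have := Int.fract_nonneg (b' - a)
        rw [Int.fract] at this
        simp only [hb2def]; linarith
      rcases lt_or_eq_of_le h1 with h | h
      · exact h
      · exact absurd (congrArg c h) hab2
    set S : Set ℝ := {x | x ∈ Set.Icc a b2 ∧ c x = c a} with hSdef
    have haS : a ∈ S := ⟨⟨le_refl a, le_of_lt ha2⟩, rfl⟩
    have hbdd : BddAbove S := ⟨b2, fun y hy => hy.1.2⟩
    set p : ℝ := sSup S with hpdef
    have hpa : a ≤ p := le_csSup hbdd haS
    have hpb : p ≤ b2 := csSup_le ⟨a, haS⟩ (fun y hy => hy.1.2)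
    -- points of both colours within ε' of p
    have near : ∀ t : Bool, ∃ w : ℝ, |w - p| ≤ ε' ∧ c w = t := by
      obtain ⟨u, huS, hu⟩ := exists_lt_of_lt_csSup ⟨a, haS⟩
        (show p - ε' < p by linarith)
      have hup : u ≤ p := le_csSup hbdd huS
      have huabs : |u - p| ≤ ε' := abs_le.mpr ⟨by linarith, by linarith⟩
      have hv : ∃ v : ℝ, |v - p| ≤ ε' ∧ c v ≠ c a := by
        rcases lt_or_eq_of_le hpb with h | h
        · refine ⟨min b2 (p + ε'), ?_, ?_⟩
          · have h1 : p < min b2 (p + ε') := lt_min h (by linarith)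
            have h2 : min b2 (p + ε') ≤ p + ε' := min_le_right _ _
            exact abs_le.mpr ⟨by linarith, by linarith⟩
          · intro hcv
            have : min b2 (p + ε') ∈ S :=
              ⟨⟨le_trans hpa (le_of_lt (lt_min h (by linarith))), min_le_left _ _⟩, hcv⟩
            have := le_csSup hbdd this
            have h1 : p < min b2 (p + ε') := lt_min h (by linarith)
            linarith
        · exact ⟨b2, by rw [← h]; simpa using le_of_lt hε'pos, hab2.symm⟩
      obtain ⟨v, hvabs, hvc⟩ := hv
      intro t
      by_cases ht : t = c a
      · exact ⟨u, huabs, huS.2.trans ht.symm⟩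
      · refine ⟨v, hvabs, ?_⟩
        cases hca : c a <;> cases hcv : c v <;> cases t <;> simp_all
    -- abbreviation: near point of any colour gives arcDist ≤ ε to p
    have nearArc : ∀ t : Bool, ∃ w : ℝ, arcDist w p ≤ ε ∧ c w = t := by
      intro t
      obtain ⟨w, hw1, hw2⟩ := near t
      exact ⟨w, le_trans (arcDist_le_of_abs _ _ _ hw1 hε'half) hε'le, hw2⟩
    by_cases h13 : c (p + 1/8) = c (p + 3/8)
    · obtain ⟨w, hw1, hw2⟩ := nearArc (c (p + 1/8))
      exact build c ε (c (p + 1/8)) permA p w (p + 1/8) (p + 3/8) hw2 rfl h13.symm hw1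
        (arcDist_le_of_eq _ _ _ (by rw [permA0]) hεnn)
        (arcDist_le_of_eq _ _ _ (by rw [permA01]) hεnn)
    by_cases h23 : c (p + 1/4) = c (p + 3/8)
    · obtain ⟨w, hw1, hw2⟩ := nearArc (c (p + 1/4))
      exact build c ε (c (p + 1/4)) permD p w (p + 1/4) (p + 3/8) hw2 rfl h23.symm hw1
        (arcDist_le_of_eq _ _ _ (by rw [permD0]) hεnn)
        (arcDist_le_of_eq _ _ _ (by rw [permD01]) hεnn)
    by_cases h16 : c (p + 1/8) = c (p + 3/4)
    · obtain ⟨w, hw1, hw2⟩ := nearArc (c (p + 1/8))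
      exact build c ε (c (p + 1/8)) permE p w (p + 1/8) (p + 3/4) hw2 rfl h16.symm hw1
        (arcDist_le_of_eq _ _ _ (by rw [permE0]) hεnn)
        (arcDist_le_of_eq _ _ _ (by rw [permE01]) hεnn)
    have h12 : c (p + 1/4) = c (p + 1/8) := boolAux h23 h13
    by_cases h4 : c (p + 1/2) = c (p + 1/8)
    · -- triple {1,2,4}/8, all exact
      refine build c ε (c (p + 1/8)) permA (p + 1/8) (p + 1/8) (p + 1/4) (p + 1/2) rfl h12 h4
        (arcDist_le_of_eq _ _ _ rfl hεnn)
        (arcDist_le_of_eq _ _ _ (by rw [permA0]; ring) hεnn)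
        (arcDist_le_of_eq _ _ _ (by rw [permA01]; ring) hεnn)
    · -- triple {3,4,6}/8, all exact
      have h43 : c (p + 1/2) = c (p + 3/8) := boolAux h4 (fun h => h13 h.symm)
      have h63 : c (p + 3/4) = c (p + 3/8) := boolAux (fun h => h16 h.symm) (fun h => h13 h.symm)
      refine build c ε (c (p + 3/8)) permA (p + 3/8) (p + 3/8) (p + 1/2) (p + 3/4) rfl h43 h63
        (arcDist_le_of_eq _ _ _ rfl hεnn)
        (arcDist_le_of_eq _ _ _ (by rw [permA0]; ring) hεnn)
        (arcDist_le_of_eq _ _ _ (by rw [permA01]; ring) hεnn)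
end

section
/- The triple (3/4, 1/6, 1/12) is nearly-Ramsey: for every ε > 0 and every two-colouring of the circle of unit perimeter, there is a monochromatic triple of points forming an ε-close permuted copy of the triangle with arc side lengths 3/4, 1/6, 1/12. -/
/-!
Suppose a colouring `c` has no monochromatic `ε`-close copy. Then no triangle `{p, q, r}` with
`q` within `ε` of `p + g` and `r` within `ε` of `p + 1/4` is monochromatic, for `g = 1/12` and
`g = 1/6` (the two orientations of the triangle). For `0 ≤ e ≤ ε` compare the two grids
`y + k/12` and `y + e + k/12`: every triangle `{k, k + d, k + 3}` (`d = 1, 2`) whose vertices are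
taken from either grid is of this kind, and a finite check shows that this forces
`c (y + e) = c y`. So `c` is locally constant, hence constant, and every exact copy is
monochromatic.
-/

open Function

theorem arcDist_le_abs_sub (x y : ℝ) : arcDist x y ≤ |x - y| := by
  rcases le_or_gt 0 (x - y) with h | h
  · have : (0 : ℝ) ≤ ⌊x - y⌋ := by exact_mod_cast Int.floor_nonneg.mpr h
    calc arcDist x y ≤ Int.fract (x - y) := min_le_left _ _
      _ ≤ |x - y| := by rw [Int.fract, abs_of_nonneg h]; linarith
  · have : (⌊x - y⌋ : ℝ) ≤ -1 := by exact_mod_cast Int.floor_le_neg_one_iff.mpr h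
    calc arcDist x y ≤ 1 - Int.fract (x - y) := min_le_right _ _
      _ ≤ |x - y| := by rw [Int.fract, abs_of_neg h]; linarith

theorem Function.Periodic.apply_add_zmod_val_div {α : Type*} {f : ℝ → α} (hf : Periodic f 1)
    {n : ℕ} [NeZero n] (x : ℝ) (m : ℕ) :
    f (x + ((m : ZMod n).val : ℝ) / n) = f (x + m / n) := by
  have hn : (n : ℝ) ≠ 0 := Nat.cast_ne_zero.mpr (NeZero.ne n)
  have hm : (m : ℝ) = (m % n : ℕ) + n * (m / n : ℕ) := by
    exact_mod_cast (Nat.mod_add_div m n).symm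
  rw [ZMod.val_natCast, hm, add_div, mul_div_cancel_left₀ _ hn, ← add_assoc]
  simpa using (hf.nat_mul (m / n) (x + (m % n : ℕ) / n)).symm

def NoMonoMixedTriangle (F : Bool → ZMod 12 → Bool) : Prop :=
  ∀ s t u k d, (d = 1 ∨ d = 2) → ¬(F t (k + d) = F s k ∧ F u (k + 3) = F s k)

-- `aₖ` and `bₖ` stand for `F false k` and `F true k`.
set_option synthInstance.maxSize 2000 in
theorem eq_of_twelve_not_mono_triangles (a0 a6 a10 b0 b1 b2 b3 b4 b6 b7 b8 b9 b11 : Bool)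
    (h1 : ¬(b11 = b9 ∧ b0 = b9)) (h2 : ¬(b0 = a10 ∧ b1 = a10)) (h3 : ¬(a10 = b9 ∧ a0 = b9))
    (h4 : ¬(a0 = b11 ∧ b2 = b11)) (h5 : ¬(b2 = b1 ∧ b4 = b1)) (h6 : ¬(b1 = a0 ∧ b3 = a0))
    (h7 : ¬(b2 = b0 ∧ b3 = b0)) (h8 : ¬(a10 = b8 ∧ b11 = b8)) (h9 : ¬(b4 = b3 ∧ b6 = b3))
    (h10 : ¬(a6 = b4 ∧ b7 = b4)) (h11 : ¬(b7 = b6 ∧ b9 = b6)) (h12 : ¬(b8 = a6 ∧ b9 = a6)) :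
    b0 = a0 := by
  revert h1 h2 h3 h4 h5 h6 h7 h8 h9 h10 h11 h12
  revert a0 a6 a10 b0 b1 b2 b3 b4 b6 b7 b8 b9 b11
  decide

theorem NoMonoMixedTriangle.apply_false_zero_eq {F : Bool → ZMod 12 → Bool}
    (h : NoMonoMixedTriangle F) : F false 0 = F true 0 :=
  (eq_of_twelve_not_mono_triangles (F false 0) (F false 6) (F false 10) (F true 0) (F true 1)
    (F true 2) (F true 3) (F true 4) (F true 6) (F true 7) (F true 8) (F true 9) (F true 11)
    (h true true true 9 2 (.inr rfl)) (h false true true 10 2 (.inr rfl))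
    (h true false false 9 1 (.inl rfl)) (h true false true 11 1 (.inl rfl))
    (h true true true 1 1 (.inl rfl)) (h false true true 0 1 (.inl rfl))
    (h true true true 0 2 (.inr rfl)) (h true false true 8 2 (.inr rfl))
    (h true true true 3 1 (.inl rfl)) (h true false true 4 2 (.inr rfl))
    (h true true true 6 1 (.inl rfl)) (h false true true 6 2 (.inr rfl))).symm

def NoNearMonoTriangle (c : ℝ → Bool) (ε : ℝ) : Prop :=
  ∀ g : ℝ, (g = 1/12 ∨ g = 1/6) → ∀ p q r : ℝ, |q - (p + g)| ≤ ε → |r - (p + 1/4)| ≤ ε →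
    ¬(c q = c p ∧ c r = c p)

namespace NoNearMonoTriangle

variable {c : ℝ → Bool} {ε : ℝ}

theorem noMonoMixedTriangle (hc : Periodic c 1) (h : NoNearMonoTriangle c ε) {e : ℝ}
    (he₀ : 0 ≤ e) (heε : e ≤ ε) (y : ℝ) :
    NoMonoMixedTriangle fun s k => c (y + (if s then e else 0) + (k.val : ℝ) / 12) := by
  intro s t u k d hd
  set δ : Bool → ℝ := fun s => if s then e else 0
  have hδ : ∀ s t, |δ t - δ s| ≤ ε := by
    intro s t
    cases s <;> cases t <;> simp [δ, abs_of_nonneg he₀, he₀.trans heε, heε]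
  have hval : ∀ (x : ℝ) (l : ZMod 12), c (x + ((k + l).val : ℝ) / 12) =
      c (x + ((k.val + l.val : ℕ) : ℝ) / 12) := by
    intro x l
    simpa using hc.apply_add_zmod_val_div (n := 12) x (k.val + l.val)
  obtain ⟨g, hg, hdg⟩ : ∃ g : ℝ, (g = 1/12 ∨ g = 1/6) ∧ (d.val : ℝ) / 12 = g := by
    rcases hd with rfl | rfl
    · exact ⟨1/12, .inl rfl, by norm_num [show (1 : ZMod 12).val = 1 from rfl]⟩
    · exact ⟨1/6, .inr rfl, by norm_num [show (2 : ZMod 12).val = 2 from rfl]⟩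
  dsimp only
  rw [hval _ d, hval _ 3]
  refine h g hg _ _ _ ?_ ?_
  · rw [← hdg]
    convert hδ s t using 2
    push_cast
    ring
  · convert hδ s u using 2
    push_cast [show (3 : ZMod 12).val = 3 from rfl]
    ring

theorem apply_add_eq (hc : Periodic c 1) (h : NoNearMonoTriangle c ε) {e : ℝ} (he₀ : 0 ≤ e)
    (heε : e ≤ ε) (y : ℝ) : c (y + e) = c y := by
  simpa using (h.noMonoMixedTriangle hc he₀ heε y).apply_false_zero_eq.symm

theorem isLocallyConstant (hc : Periodic c 1) (h : NoNearMonoTriangle c ε) (hε : 0 < ε) :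
    IsLocallyConstant c := by
  refine (IsLocallyConstant.iff_eventually_eq c).mpr fun x => ?_
  filter_upwards [Metric.ball_mem_nhds x hε] with z hz
  rw [Metric.mem_ball, Real.dist_eq] at hz
  rcases le_total x z with hxz | hzx
  · simpa using h.apply_add_eq hc (sub_nonneg.mpr hxz) (by linarith [le_abs_self (z - x)]) x
  · simpa using (h.apply_add_eq hc (sub_nonneg.mpr hzx) (by linarith [neg_abs_le (z - x)]) z).symm

end NoNearMonoTriangle

theorem exists_near_copy_of_mono {c : ℝ → Bool} {ε g p q r : ℝ} (hg : g = 1/12 ∨ g = 1/6)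
    (hq : |q - (p + g)| ≤ ε) (hr : |r - (p + 1/4)| ≤ ε) (hmono : c q = c p ∧ c r = c p) :
    ∃ (b : Bool) (x : ℝ) (σ : Equiv.Perm (Fin 3)) (q : Fin 3 → ℝ),
      ∀ j : Fin 3, c (q j) = b ∧
        arcDist (q j)
          (x + ∑ i ∈ Finset.univ.filter (fun i => i < j),
            (![3/4, 1/6, 1/12] : Fin 3 → ℝ) (σ i)) ≤ ε := by
  set v : Fin 3 → ℝ := ![3/4, 1/6, 1/12] with hv
  obtain ⟨σ, hσ₁, hσ₂⟩ : ∃ σ : Equiv.Perm (Fin 3), v (σ 0) = g ∧ v (σ 0) + v (σ 1) = 1/4 := by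
    rcases hg with rfl | rfl
    · refine ⟨Equiv.swap 0 2, ?_⟩
      rw [show Equiv.swap (0 : Fin 3) 2 0 = 2 by decide,
        show Equiv.swap (0 : Fin 3) 2 1 = 1 by decide]
      norm_num [hv, Matrix.cons_val_two]
    · refine ⟨finRotate 3, ?_⟩
      rw [show finRotate 3 0 = 1 by decide, show finRotate 3 1 = 2 by decide]
      norm_num [hv, Matrix.cons_val_two]
  have hε : 0 ≤ ε := (abs_nonneg _).trans hq
  refine ⟨c p, p, σ, ![p, q, r], fun j => ?_⟩
  fin_cases j
  · simpa using (arcDist_le_abs_sub p p).trans (by simpa using hε)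
  · simpa [Finset.sum_filter, Fin.sum_univ_three, hσ₁, hmono.1] using
      (arcDist_le_abs_sub _ _).trans hq
  · simpa [Finset.sum_filter, Fin.sum_univ_three, hσ₂, hmono.2] using
      (arcDist_le_abs_sub _ _).trans hr

/-- The triple `(3/4, 1/6, 1/12)` is nearly-Ramsey. -/
theorem stmt_14 (c : ℝ → Bool) (hper : ∀ x, c (x + 1) = c x) (ε : ℝ) (hε : 0 < ε) :
    ∃ (b : Bool) (x : ℝ) (σ : Equiv.Perm (Fin 3)) (q : Fin 3 → ℝ),
      ∀ j : Fin 3, c (q j) = b ∧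
        arcDist (q j)
          (x + ∑ i ∈ Finset.univ.filter (fun i => i < j),
            (![3/4, 1/6, 1/12] : Fin 3 → ℝ) (σ i)) ≤ ε := by
  by_contra hcopy
  have hno : NoNearMonoTriangle c ε := fun g hg p q r hq hr hmono =>
    hcopy (exists_near_copy_of_mono hg hq hr hmono)
  have hconst := (hno.isLocallyConstant hper hε).apply_eq_of_preconnectedSpace
  exact hno (1/12) (.inl rfl) 0 (1/12) (1/4) (by simpa using hε.le) (by simpa using hε.le)
    ⟨hconst _ _, hconst _ _⟩
end

section
/- The triple (7/12, 1/4, 1/6) is nearly-Ramsey: for every ε > 0 and every two-colouring of the circle of unit perimeter, there is a monochromatic triple of points forming an ε-close permuted copy of the triangle with arc side lengths 7/12, 1/4, 1/6. -/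
set_option maxHeartbeats 4000000

lemma arc_le (a b : ℝ) : arcDist a b ≤ |a - b| := by
  unfold arcDist
  rcases le_or_gt (1/2 : ℝ) |a - b| with h | h
  · have h1 := Int.fract_nonneg (a - b)
    have h2 := Int.fract_lt_one (a - b)
    rcases le_total (Int.fract (a-b)) (1 - Int.fract (a-b)) with h3 | h3
    · calc min (Int.fract (a-b)) (1 - Int.fract (a-b)) ≤ Int.fract (a-b) := min_le_left _ _
        _ ≤ 1/2 := by linarith
        _ ≤ |a - b| := h
    · calc min (Int.fract (a-b)) (1 - Int.fract (a-b)) ≤ 1 - Int.fract (a-b) := min_le_right _ _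
        _ ≤ 1/2 := by linarith
        _ ≤ |a - b| := h
  · rcases le_or_gt 0 (a - b) with h4 | h4
    · have : Int.fract (a - b) = a - b := Int.fract_eq_self.mpr ⟨h4, by cases abs_cases (a-b) <;> linarith⟩
      rw [this]
      calc min (a-b) (1 - (a-b)) ≤ a - b := min_le_left _ _
        _ ≤ |a-b| := le_abs_self _
    · have habs : |a - b| = -(a-b) := abs_of_neg h4
      have : Int.fract (a - b) = a - b + 1 := by
        have h5 : Int.fract (a - b) = Int.fract (a - b + 1) := by
          rw [show a - b + 1 = a - b + (1 : ℤ) by push_cast; ring, Int.fract_add_intCast]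
        rw [h5]
        exact Int.fract_eq_self.mpr ⟨by linarith, by linarith⟩
      rw [this]
      calc min (a-b+1) (1 - (a-b+1)) ≤ 1 - (a-b+1) := min_le_right _ _
        _ ≤ |a-b| := by rw [habs]; linarith

lemma key (c : ℝ → Bool) (ε : ℝ) (σ : Equiv.Perm (Fin 3)) (x u v w : ℝ)
    (hu : |u - x| ≤ ε)
    (hv : |v - (x + (![7/12, 1/4, 1/6] : Fin 3 → ℝ) (σ 0))| ≤ ε)
    (hw : |w - (x + (![7/12, 1/4, 1/6] : Fin 3 → ℝ) (σ 0) + (![7/12, 1/4, 1/6] : Fin 3 → ℝ) (σ 1))| ≤ ε)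
    (h1 : c v = c u) (h2 : c w = c u) :
    ∃ (b : Bool) (x : ℝ) (σ : Equiv.Perm (Fin 3)) (q : Fin 3 → ℝ),
      ∀ j : Fin 3, c (q j) = b ∧
        arcDist (q j)
          (x + ∑ i ∈ Finset.univ.filter (fun i => i < j),
            (![7/12, 1/4, 1/6] : Fin 3 → ℝ) (σ i)) ≤ ε := by
  refine ⟨c u, x, σ, ![u, v, w], ?_⟩
  have hs0 : (Finset.univ.filter (fun i : Fin 3 => i < (0 : Fin 3))) = ∅ := by decide
  have hs1 : (Finset.univ.filter (fun i : Fin 3 => i < (1 : Fin 3))) = {0} := by decide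
  have hs2 : (Finset.univ.filter (fun i : Fin 3 => i < (2 : Fin 3))) = {0, 1} := by decide
  intro j
  fin_cases j
  · refine ⟨rfl, ?_⟩
    simpa [Finset.sum_filter, Fin.sum_univ_three] using (arc_le u x).trans hu
  · refine ⟨h1, ?_⟩
    simpa [Finset.sum_filter, Fin.sum_univ_three] using (arc_le v _).trans hv
  · refine ⟨h2, ?_⟩
    simpa [Finset.sum_filter, Fin.sum_univ_three, add_assoc] using (arc_le w _).trans hw

lemma key23 (c : ℝ → Bool) (ε : ℝ) (x u v w : ℝ)
    (hu : |u - x| ≤ ε)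
    (hv : |v - (x + 1/6)| ≤ ε)
    (hw : |w - (x + 1/6 + 1/4)| ≤ ε)
    (h1 : c v = c u) (h2 : c w = c u) :
    ∃ (b : Bool) (x : ℝ) (σ : Equiv.Perm (Fin 3)) (q : Fin 3 → ℝ),
      ∀ j : Fin 3, c (q j) = b ∧
        arcDist (q j)
          (x + ∑ i ∈ Finset.univ.filter (fun i => i < j),
            (![7/12, 1/4, 1/6] : Fin 3 → ℝ) (σ i)) ≤ ε :=
  key c ε ⟨![2,1,0], ![2,1,0], by decide, by decide⟩ x u v w hu hv hw h1 h2

lemma key27 (c : ℝ → Bool) (ε : ℝ) (x u v w : ℝ)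
    (hu : |u - x| ≤ ε)
    (hv : |v - (x + 1/6)| ≤ ε)
    (hw : |w - (x + 1/6 + 7/12)| ≤ ε)
    (h1 : c v = c u) (h2 : c w = c u) :
    ∃ (b : Bool) (x : ℝ) (σ : Equiv.Perm (Fin 3)) (q : Fin 3 → ℝ),
      ∀ j : Fin 3, c (q j) = b ∧
        arcDist (q j)
          (x + ∑ i ∈ Finset.univ.filter (fun i => i < j),
            (![7/12, 1/4, 1/6] : Fin 3 → ℝ) (σ i)) ≤ ε :=
  key c ε ⟨![2,0,1], ![1,2,0], by decide, by decide⟩ x u v w hu hv hw h1 h2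

lemma key32 (c : ℝ → Bool) (ε : ℝ) (x u v w : ℝ)
    (hu : |u - x| ≤ ε)
    (hv : |v - (x + 1/4)| ≤ ε)
    (hw : |w - (x + 1/4 + 1/6)| ≤ ε)
    (h1 : c v = c u) (h2 : c w = c u) :
    ∃ (b : Bool) (x : ℝ) (σ : Equiv.Perm (Fin 3)) (q : Fin 3 → ℝ),
      ∀ j : Fin 3, c (q j) = b ∧
        arcDist (q j)
          (x + ∑ i ∈ Finset.univ.filter (fun i => i < j),
            (![7/12, 1/4, 1/6] : Fin 3 → ℝ) (σ i)) ≤ ε :=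
  key c ε ⟨![1,2,0], ![2,0,1], by decide, by decide⟩ x u v w hu hv hw h1 h2

lemma key37 (c : ℝ → Bool) (ε : ℝ) (x u v w : ℝ)
    (hu : |u - x| ≤ ε)
    (hv : |v - (x + 1/4)| ≤ ε)
    (hw : |w - (x + 1/4 + 7/12)| ≤ ε)
    (h1 : c v = c u) (h2 : c w = c u) :
    ∃ (b : Bool) (x : ℝ) (σ : Equiv.Perm (Fin 3)) (q : Fin 3 → ℝ),
      ∀ j : Fin 3, c (q j) = b ∧
        arcDist (q j)
          (x + ∑ i ∈ Finset.univ.filter (fun i => i < j),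
            (![7/12, 1/4, 1/6] : Fin 3 → ℝ) (σ i)) ≤ ε :=
  key c ε ⟨![1,0,2], ![1,0,2], by decide, by decide⟩ x u v w hu hv hw h1 h2

lemma key72 (c : ℝ → Bool) (ε : ℝ) (x u v w : ℝ)
    (hu : |u - x| ≤ ε)
    (hv : |v - (x + 7/12)| ≤ ε)
    (hw : |w - (x + 7/12 + 1/6)| ≤ ε)
    (h1 : c v = c u) (h2 : c w = c u) :
    ∃ (b : Bool) (x : ℝ) (σ : Equiv.Perm (Fin 3)) (q : Fin 3 → ℝ),
      ∀ j : Fin 3, c (q j) = b ∧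
        arcDist (q j)
          (x + ∑ i ∈ Finset.univ.filter (fun i => i < j),
            (![7/12, 1/4, 1/6] : Fin 3 → ℝ) (σ i)) ≤ ε :=
  key c ε ⟨![0,2,1], ![0,2,1], by decide, by decide⟩ x u v w hu hv hw h1 h2

lemma key73 (c : ℝ → Bool) (ε : ℝ) (x u v w : ℝ)
    (hu : |u - x| ≤ ε)
    (hv : |v - (x + 7/12)| ≤ ε)
    (hw : |w - (x + 7/12 + 1/4)| ≤ ε)
    (h1 : c v = c u) (h2 : c w = c u) :
    ∃ (b : Bool) (x : ℝ) (σ : Equiv.Perm (Fin 3)) (q : Fin 3 → ℝ),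
      ∀ j : Fin 3, c (q j) = b ∧
        arcDist (q j)
          (x + ∑ i ∈ Finset.univ.filter (fun i => i < j),
            (![7/12, 1/4, 1/6] : Fin 3 → ℝ) (σ i)) ≤ ε :=
  key c ε ⟨![0,1,2], ![0,1,2], by decide, by decide⟩ x u v w hu hv hw h1 h2

/-- The triple `(7/12, 1/4, 1/6)` is nearly-Ramsey. -/
theorem stmt_15 (c : ℝ → Bool) (hper : ∀ x, c (x + 1) = c x) (ε : ℝ) (hε : 0 < ε) :
    ∃ (b : Bool) (x : ℝ) (σ : Equiv.Perm (Fin 3)) (q : Fin 3 → ℝ),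
      ∀ j : Fin 3, c (q j) = b ∧
        arcDist (q j)
          (x + ∑ i ∈ Finset.univ.filter (fun i => i < j),
            (![7/12, 1/4, 1/6] : Fin 3 → ℝ) (σ i)) ≤ ε := by
  by_cases hconst : ∀ y s : ℝ, 0 ≤ s → s ≤ ε → c (y + s) = c y
  · have hstep : ∀ n : ℕ, ∀ t : ℝ, 0 ≤ t → t ≤ (n + 1) * ε → ∀ y : ℝ, c (y + t) = c y := by
      intro n
      induction n with
      | zero => intro t ht0 ht1 y; exact hconst y t ht0 (by push_cast at ht1; linarith)
      | succ n ih =>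
        intro t ht0 ht1 y
        rcases le_or_gt t ε with h | h
        · exact hconst y t ht0 h
        · have e1 : y + t = (y + (t - ε)) + ε := by ring
          rw [e1, hconst (y + (t - ε)) ε hε.le le_rfl]
          exact ih (t - ε) (by linarith) (by push_cast at ht1 ⊢; linarith) y
    have hall : ∀ t : ℝ, 0 ≤ t → ∀ y : ℝ, c (y + t) = c y := by
      intro t ht y
      obtain ⟨n, hn⟩ := exists_nat_ge (t / ε)
      refine hstep n t ht ?_ y
      have h2 := (div_le_iff₀ hε).mp hn
      push_cast
      nlinarith [hε.le]
    refine key73 c ε 0 0 (0 + 7/12) (0 + 7/12 + 1/4) ?_ ?_ ?_ ?_ ?_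
    · simpa using hε.le
    · simpa using hε.le
    · simpa using hε.le
    · exact hall (7/12) (by norm_num) 0
    · rw [hall (1/4) (by norm_num) (0 + 7/12)]
      exact hall (7/12) (by norm_num) 0
  · push_neg at hconst
    obtain ⟨y, s, hs0, hsE, hne⟩ := hconst
    cases hy : c y with
    | false =>
      have hB : c (y + s) = true := by cases hB' : c (y + s) <;> simp_all
      cases h1 : c (y + 2/12 + 1 * (ε/2)) with
      | false =>
        cases h2 : c (y + 9/12 + 2 * (ε/2)) with
        | false =>
          exact key27 c ε (y) (y) (y + 2/12 + 1 * (ε/2)) (y + 9/12 + 2 * (ε/2)) (by rw [abs_le]; constructor <;> linarith) (by rw [abs_le]; constructor <;> linarith) (by rw [abs_le]; constructor <;> linarith) (h1.trans hy.symm) (h2.trans hy.symm)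
        | true =>
          cases h3 : c (y + 7/12 + 2 * (ε/2) + s) with
          | false =>
            cases h4 : c (y + 5/12 + (-2) * (ε/2) + s) with
            | false =>
              exact key23 c ε (y) (y) (y + 2/12 + 1 * (ε/2)) (y + 5/12 + (-2) * (ε/2) + s) (by rw [abs_le]; constructor <;> linarith) (by rw [abs_le]; constructor <;> linarith) (by rw [abs_le]; constructor <;> linarith) (h1.trans hy.symm) (h4.trans hy.symm)
            | true =>
              cases h5 : c (y + 3/12 + 1 * (ε/2)) with
              | false =>
                cases h6 : c (y + 4/12 + 2 * (ε/2)) with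
                | false =>
                  exact key37 c ε (y + 4/12 + 2 * (ε/2)) (y + 4/12 + 2 * (ε/2)) (y + 7/12 + 2 * (ε/2) + s) (y + 2/12 + 1 * (ε/2) + 1) (by rw [abs_le]; constructor <;> linarith) (by rw [abs_le]; constructor <;> linarith) (by rw [abs_le]; constructor <;> linarith) (h3.trans h6.symm) (((hper (y + 2/12 + 1 * (ε/2))).trans h1).trans h6.symm)
                | true =>
                  cases h7 : c (y + 6/12 + 1 * (ε/2)) with
                  | false =>
                    cases h8 : c (y + 8/12 + s) with
                    | false =>
                      exact key32 c ε (y + 3/12 + 1 * (ε/2)) (y + 3/12 + 1 * (ε/2)) (y + 6/12 + 1 * (ε/2)) (y + 8/12 + s) (by rw [abs_le]; constructor <;> linarith) (by rw [abs_le]; constructor <;> linarith) (by rw [abs_le]; constructor <;> linarith) (h7.trans h5.symm) (h8.trans h5.symm)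
                    | true =>
                      cases h9 : c (y + 10/12 + (-2) * (ε/2) + s) with
                      | false =>
                        exact key37 c ε (y) (y) (y + 3/12 + 1 * (ε/2)) (y + 10/12 + (-2) * (ε/2) + s) (by rw [abs_le]; constructor <;> linarith) (by rw [abs_le]; constructor <;> linarith) (by rw [abs_le]; constructor <;> linarith) (h5.trans hy.symm) (h9.trans hy.symm)
                      | true =>
                        exact key32 c ε (y + 5/12 + (-2) * (ε/2) + s) (y + 5/12 + (-2) * (ε/2) + s) (y + 8/12 + s) (y + 10/12 + (-2) * (ε/2) + s) (by rw [abs_le]; constructor <;> linarith) (by rw [abs_le]; constructor <;> linarith) (by rw [abs_le]; constructor <;> linarith) (h8.trans h4.symm) (h9.trans h4.symm)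
                  | true =>
                    exact key23 c ε (y + 4/12 + 2 * (ε/2)) (y + 4/12 + 2 * (ε/2)) (y + 6/12 + 1 * (ε/2)) (y + 9/12 + 2 * (ε/2)) (by rw [abs_le]; constructor <;> linarith) (by rw [abs_le]; constructor <;> linarith) (by rw [abs_le]; constructor <;> linarith) (h7.trans h6.symm) (h2.trans h6.symm)
              | true =>
                exact key32 c ε (y + s) (y + s) (y + 3/12 + 1 * (ε/2)) (y + 5/12 + (-2) * (ε/2) + s) (by rw [abs_le]; constructor <;> linarith) (by rw [abs_le]; constructor <;> linarith) (by rw [abs_le]; constructor <;> linarith) (h5.trans hB.symm) (h4.trans hB.symm)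
          | true =>
            exact key72 c ε (y + s) (y + s) (y + 7/12 + 2 * (ε/2) + s) (y + 9/12 + 2 * (ε/2)) (by rw [abs_le]; constructor <;> linarith) (by rw [abs_le]; constructor <;> linarith) (by rw [abs_le]; constructor <;> linarith) (h3.trans hB.symm) (h2.trans hB.symm)
      | true =>
        cases h10 : c (y + 9/12 + 2 * (ε/2)) with
        | false =>
          cases h11 : c (y + 7/12 + 2 * (ε/2) + s) with
          | false =>
            exact key37 c ε (y + 9/12 + 2 * (ε/2)) (y + 9/12 + 2 * (ε/2)) (y + 1) (y + 7/12 + 2 * (ε/2) + s + 1) (by rw [abs_le]; constructor <;> linarith) (by rw [abs_le]; constructor <;> linarith) (by rw [abs_le]; constructor <;> linarith) (((hper (y)).trans hy).trans h10.symm) (((hper (y + 7/12 + 2 * (ε/2) + s)).trans h11).trans h10.symm)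
          | true =>
            cases h12 : c (y + 5/12 + (-2) * (ε/2) + s) with
            | false =>
              cases h13 : c (y + 3/12 + 1 * (ε/2)) with
              | false =>
                exact key32 c ε (y) (y) (y + 3/12 + 1 * (ε/2)) (y + 5/12 + (-2) * (ε/2) + s) (by rw [abs_le]; constructor <;> linarith) (by rw [abs_le]; constructor <;> linarith) (by rw [abs_le]; constructor <;> linarith) (h13.trans hy.symm) (h12.trans hy.symm)
              | true =>
                cases h14 : c (y + 10/12 + (-2) * (ε/2) + s) with
                | false =>
                  cases h15 : c (y + 4/12 + 2 * (ε/2)) with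
                  | false =>
                    cases h16 : c (y + 6/12 + 1 * (ε/2)) with
                    | false =>
                      exact key23 c ε (y + 4/12 + 2 * (ε/2)) (y + 4/12 + 2 * (ε/2)) (y + 6/12 + 1 * (ε/2)) (y + 9/12 + 2 * (ε/2)) (by rw [abs_le]; constructor <;> linarith) (by rw [abs_le]; constructor <;> linarith) (by rw [abs_le]; constructor <;> linarith) (h16.trans h15.symm) (h10.trans h15.symm)
                    | true =>
                      cases h17 : c (y + 8/12 + s) with
                      | false =>
                        exact key32 c ε (y + 5/12 + (-2) * (ε/2) + s) (y + 5/12 + (-2) * (ε/2) + s) (y + 8/12 + s) (y + 10/12 + (-2) * (ε/2) + s) (by rw [abs_le]; constructor <;> linarith) (by rw [abs_le]; constructor <;> linarith) (by rw [abs_le]; constructor <;> linarith) (h17.trans h12.symm) (h14.trans h12.symm)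
                      | true =>
                        exact key32 c ε (y + 3/12 + 1 * (ε/2)) (y + 3/12 + 1 * (ε/2)) (y + 6/12 + 1 * (ε/2)) (y + 8/12 + s) (by rw [abs_le]; constructor <;> linarith) (by rw [abs_le]; constructor <;> linarith) (by rw [abs_le]; constructor <;> linarith) (h16.trans h13.symm) (h17.trans h13.symm)
                  | true =>
                    exact key37 c ε (y + 4/12 + 2 * (ε/2)) (y + 4/12 + 2 * (ε/2)) (y + 7/12 + 2 * (ε/2) + s) (y + 2/12 + 1 * (ε/2) + 1) (by rw [abs_le]; constructor <;> linarith) (by rw [abs_le]; constructor <;> linarith) (by rw [abs_le]; constructor <;> linarith) (h11.trans h15.symm) (((hper (y + 2/12 + 1 * (ε/2))).trans h1).trans h15.symm)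
                | true =>
                  exact key37 c ε (y + s) (y + s) (y + 3/12 + 1 * (ε/2)) (y + 10/12 + (-2) * (ε/2) + s) (by rw [abs_le]; constructor <;> linarith) (by rw [abs_le]; constructor <;> linarith) (by rw [abs_le]; constructor <;> linarith) (h13.trans hB.symm) (h14.trans hB.symm)
            | true =>
              exact key23 c ε (y + s) (y + s) (y + 2/12 + 1 * (ε/2)) (y + 5/12 + (-2) * (ε/2) + s) (by rw [abs_le]; constructor <;> linarith) (by rw [abs_le]; constructor <;> linarith) (by rw [abs_le]; constructor <;> linarith) (h1.trans hB.symm) (h12.trans hB.symm)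
        | true =>
          exact key27 c ε (y + s) (y + s) (y + 2/12 + 1 * (ε/2)) (y + 9/12 + 2 * (ε/2)) (by rw [abs_le]; constructor <;> linarith) (by rw [abs_le]; constructor <;> linarith) (by rw [abs_le]; constructor <;> linarith) (h1.trans hB.symm) (h10.trans hB.symm)
    | true =>
      have hB : c (y + s) = false := by cases hB' : c (y + s) <;> simp_all
      cases h18 : c (y + 2/12 + 1 * (ε/2)) with
      | false =>
        cases h19 : c (y + 9/12 + 2 * (ε/2)) with
        | false =>
          exact key27 c ε (y + s) (y + s) (y + 2/12 + 1 * (ε/2)) (y + 9/12 + 2 * (ε/2)) (by rw [abs_le]; constructor <;> linarith) (by rw [abs_le]; constructor <;> linarith) (by rw [abs_le]; constructor <;> linarith) (h18.trans hB.symm) (h19.trans hB.symm)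
        | true =>
          cases h20 : c (y + 7/12 + 2 * (ε/2) + s) with
          | false =>
            cases h21 : c (y + 5/12 + (-2) * (ε/2) + s) with
            | false =>
              exact key23 c ε (y + s) (y + s) (y + 2/12 + 1 * (ε/2)) (y + 5/12 + (-2) * (ε/2) + s) (by rw [abs_le]; constructor <;> linarith) (by rw [abs_le]; constructor <;> linarith) (by rw [abs_le]; constructor <;> linarith) (h18.trans hB.symm) (h21.trans hB.symm)
            | true =>
              cases h22 : c (y + 3/12 + 1 * (ε/2)) with
              | false =>
                cases h23 : c (y + 10/12 + (-2) * (ε/2) + s) with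
                | false =>
                  exact key37 c ε (y + s) (y + s) (y + 3/12 + 1 * (ε/2)) (y + 10/12 + (-2) * (ε/2) + s) (by rw [abs_le]; constructor <;> linarith) (by rw [abs_le]; constructor <;> linarith) (by rw [abs_le]; constructor <;> linarith) (h22.trans hB.symm) (h23.trans hB.symm)
                | true =>
                  cases h24 : c (y + 4/12 + 2 * (ε/2)) with
                  | false =>
                    exact key37 c ε (y + 4/12 + 2 * (ε/2)) (y + 4/12 + 2 * (ε/2)) (y + 7/12 + 2 * (ε/2) + s) (y + 2/12 + 1 * (ε/2) + 1) (by rw [abs_le]; constructor <;> linarith) (by rw [abs_le]; constructor <;> linarith) (by rw [abs_le]; constructor <;> linarith) (h20.trans h24.symm) (((hper (y + 2/12 + 1 * (ε/2))).trans h18).trans h24.symm)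
                  | true =>
                    cases h25 : c (y + 6/12 + 1 * (ε/2)) with
                    | false =>
                      cases h26 : c (y + 8/12 + s) with
                      | false =>
                        exact key32 c ε (y + 3/12 + 1 * (ε/2)) (y + 3/12 + 1 * (ε/2)) (y + 6/12 + 1 * (ε/2)) (y + 8/12 + s) (by rw [abs_le]; constructor <;> linarith) (by rw [abs_le]; constructor <;> linarith) (by rw [abs_le]; constructor <;> linarith) (h25.trans h22.symm) (h26.trans h22.symm)
                      | true =>
                        exact key32 c ε (y + 5/12 + (-2) * (ε/2) + s) (y + 5/12 + (-2) * (ε/2) + s) (y + 8/12 + s) (y + 10/12 + (-2) * (ε/2) + s) (by rw [abs_le]; constructor <;> linarith) (by rw [abs_le]; constructor <;> linarith) (by rw [abs_le]; constructor <;> linarith) (h26.trans h21.symm) (h23.trans h21.symm)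
                    | true =>
                      exact key23 c ε (y + 4/12 + 2 * (ε/2)) (y + 4/12 + 2 * (ε/2)) (y + 6/12 + 1 * (ε/2)) (y + 9/12 + 2 * (ε/2)) (by rw [abs_le]; constructor <;> linarith) (by rw [abs_le]; constructor <;> linarith) (by rw [abs_le]; constructor <;> linarith) (h25.trans h24.symm) (h19.trans h24.symm)
              | true =>
                exact key32 c ε (y) (y) (y + 3/12 + 1 * (ε/2)) (y + 5/12 + (-2) * (ε/2) + s) (by rw [abs_le]; constructor <;> linarith) (by rw [abs_le]; constructor <;> linarith) (by rw [abs_le]; constructor <;> linarith) (h22.trans hy.symm) (h21.trans hy.symm)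
          | true =>
            exact key37 c ε (y + 9/12 + 2 * (ε/2)) (y + 9/12 + 2 * (ε/2)) (y + 1) (y + 7/12 + 2 * (ε/2) + s + 1) (by rw [abs_le]; constructor <;> linarith) (by rw [abs_le]; constructor <;> linarith) (by rw [abs_le]; constructor <;> linarith) (((hper (y)).trans hy).trans h19.symm) (((hper (y + 7/12 + 2 * (ε/2) + s)).trans h20).trans h19.symm)
      | true =>
        cases h27 : c (y + 9/12 + 2 * (ε/2)) with
        | false =>
          cases h28 : c (y + 7/12 + 2 * (ε/2) + s) with
          | false =>
            exact key72 c ε (y + s) (y + s) (y + 7/12 + 2 * (ε/2) + s) (y + 9/12 + 2 * (ε/2)) (by rw [abs_le]; constructor <;> linarith) (by rw [abs_le]; constructor <;> linarith) (by rw [abs_le]; constructor <;> linarith) (h28.trans hB.symm) (h27.trans hB.symm)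
          | true =>
            cases h29 : c (y + 5/12 + (-2) * (ε/2) + s) with
            | false =>
              cases h30 : c (y + 3/12 + 1 * (ε/2)) with
              | false =>
                exact key32 c ε (y + s) (y + s) (y + 3/12 + 1 * (ε/2)) (y + 5/12 + (-2) * (ε/2) + s) (by rw [abs_le]; constructor <;> linarith) (by rw [abs_le]; constructor <;> linarith) (by rw [abs_le]; constructor <;> linarith) (h30.trans hB.symm) (h29.trans hB.symm)
              | true =>
                cases h31 : c (y + 4/12 + 2 * (ε/2)) with
                | false =>
                  cases h32 : c (y + 6/12 + 1 * (ε/2)) with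
                  | false =>
                    exact key23 c ε (y + 4/12 + 2 * (ε/2)) (y + 4/12 + 2 * (ε/2)) (y + 6/12 + 1 * (ε/2)) (y + 9/12 + 2 * (ε/2)) (by rw [abs_le]; constructor <;> linarith) (by rw [abs_le]; constructor <;> linarith) (by rw [abs_le]; constructor <;> linarith) (h32.trans h31.symm) (h27.trans h31.symm)
                  | true =>
                    cases h33 : c (y + 8/12 + s) with
                    | false =>
                      cases h34 : c (y + 10/12 + (-2) * (ε/2) + s) with
                      | false =>
                        exact key32 c ε (y + 5/12 + (-2) * (ε/2) + s) (y + 5/12 + (-2) * (ε/2) + s) (y + 8/12 + s) (y + 10/12 + (-2) * (ε/2) + s) (by rw [abs_le]; constructor <;> linarith) (by rw [abs_le]; constructor <;> linarith) (by rw [abs_le]; constructor <;> linarith) (h33.trans h29.symm) (h34.trans h29.symm)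
                      | true =>
                        exact key37 c ε (y) (y) (y + 3/12 + 1 * (ε/2)) (y + 10/12 + (-2) * (ε/2) + s) (by rw [abs_le]; constructor <;> linarith) (by rw [abs_le]; constructor <;> linarith) (by rw [abs_le]; constructor <;> linarith) (h30.trans hy.symm) (h34.trans hy.symm)
                    | true =>
                      exact key32 c ε (y + 3/12 + 1 * (ε/2)) (y + 3/12 + 1 * (ε/2)) (y + 6/12 + 1 * (ε/2)) (y + 8/12 + s) (by rw [abs_le]; constructor <;> linarith) (by rw [abs_le]; constructor <;> linarith) (by rw [abs_le]; constructor <;> linarith) (h32.trans h30.symm) (h33.trans h30.symm)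
                | true =>
                  exact key37 c ε (y + 4/12 + 2 * (ε/2)) (y + 4/12 + 2 * (ε/2)) (y + 7/12 + 2 * (ε/2) + s) (y + 2/12 + 1 * (ε/2) + 1) (by rw [abs_le]; constructor <;> linarith) (by rw [abs_le]; constructor <;> linarith) (by rw [abs_le]; constructor <;> linarith) (h28.trans h31.symm) (((hper (y + 2/12 + 1 * (ε/2))).trans h18).trans h31.symm)
            | true =>
              exact key23 c ε (y) (y) (y + 2/12 + 1 * (ε/2)) (y + 5/12 + (-2) * (ε/2) + s) (by rw [abs_le]; constructor <;> linarith) (by rw [abs_le]; constructor <;> linarith) (by rw [abs_le]; constructor <;> linarith) (h18.trans hy.symm) (h29.trans hy.symm)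
        | true =>
          exact key27 c ε (y) (y) (y + 2/12 + 1 * (ε/2)) (y + 9/12 + 2 * (ε/2)) (by rw [abs_le]; constructor <;> linarith) (by rw [abs_le]; constructor <;> linarith) (by rw [abs_le]; constructor <;> linarith) (h18.trans hy.symm) (h27.trans hy.symm)
end
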